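/- arXiv:2008.10403 — 6 statements merged into one kernel-verified Lean document; each statement's English description precedes it below -/
import Mathlib

section
/- Let I be a nonempty finite set, let a be a real-valued function on the nonempty subsets of I, and let b be its cumulant family. Then for every nonempty subset S ⊆ I the inversion formula a(S) = ∑_π ∏_{B ∈ π} b(B) holds, where the sum ranges over all set partitions π of S into nonempty blocks. -/
/-!
Statement 0: cumulant inversion formula.
Given a real-valued function `a` on the (nonempty) subsets of a nonempty finite set `I`,
its cumulant family `b` is defined by
`b(S) = ∑_π (−1)^{|π|−1} (|π|−1)! ∏_{B∈π} a(B)`, the sum being over set partitions of `S`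
into nonempty blocks.  Then for every nonempty `S ⊆ I`,
`a(S) = ∑_π ∏_{B ∈ π} b(B)`.
-/

open Finset

variable {α : Type*} [DecidableEq α]

open scoped Classical in
/-- The set partitions of a finite set `S` into nonempty blocks, encoded as finsets of blocks. -/
noncomputable def setPartitions (S : Finset α) : Finset (Finset (Finset α)) :=
  S.powerset.powerset.filter fun P =>
    (∀ B ∈ P, B.Nonempty) ∧ (∀ B ∈ P, ∀ B' ∈ P, B ≠ B' → Disjoint B B') ∧ P.sup id = S

/-- The cumulant family associated to a function on subsets. -/
noncomputable def cumulantFamily (a : Finset α → ℝ) (S : Finset α) : ℝ :=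
  ∑ P ∈ setPartitions S,
    (-1 : ℝ) ^ (P.card - 1) * (Nat.factorial (P.card - 1)) * ∏ B ∈ P, a B

/-!
Strong induction on `S`. Splitting off the block of a fixed `x ∈ S` writes `∑_π ∏ b` as
`∑_{x ∈ B ⊆ S} b(B) · ∑_{τ ∈ Π(S \ B)} ∏ b`, and by induction the inner sum is `a(S \ B)`
(or `1` when `B = S`). So it suffices that `∑_{x ∈ B ⊆ S} b(B) a(S \ B) = a(S)`. Expanding
`b(B)` over partitions of `B` and adjoining `S \ B` as one more block, a partition `R` of `S`
with `k` blocks is counted with weight `c(k) + (k - 1) c(k - 1)`, where `c(k) = (-1)^(k-1) (k-1)!`;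
this is `1` for `k = 1` and `0` otherwise.
-/

section SetPartitions

variable {S D : Finset α} {R τ : Finset (Finset α)}

lemma mem_setPartitions : R ∈ setPartitions S ↔ (∀ B ∈ R, B.Nonempty) ∧
    (∀ B ∈ R, ∀ B' ∈ R, B ≠ B' → Disjoint B B') ∧ R.sup id = S := by
  classical
  simp only [setPartitions, mem_filter, mem_powerset, and_iff_right_iff_imp]
  rintro ⟨-, -, rfl⟩ B hB
  exact mem_powerset.2 (le_sup (f := id) hB)

lemma subset_of_mem_setPartitions (hR : R ∈ setPartitions S) {B : Finset α} (hB : B ∈ R) :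
    B ⊆ S :=
  (mem_setPartitions.1 hR).2.2 ▸ le_sup (f := id) hB

lemma setPartitions_empty : setPartitions (∅ : Finset α) = {∅} := by
  ext R
  rw [mem_singleton]
  constructor
  · intro hR
    refine eq_empty_of_forall_notMem fun B hB => ?_
    obtain ⟨y, hy⟩ := (mem_setPartitions.1 hR).1 B hB
    exact notMem_empty y (subset_of_mem_setPartitions hR hB hy)
  · rintro rfl
    simp [mem_setPartitions]

lemma eq_singleton_of_mem_setPartitions (hR : R ∈ setPartitions S) (h : #R = 1) : R = {S} := by
  obtain ⟨B, rfl⟩ := card_eq_one.1 h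
  rw [mem_setPartitions, sup_singleton] at hR
  rw [← hR.2.2, id]

lemma singleton_mem_setPartitions (hS : S.Nonempty) : {S} ∈ setPartitions S := by
  simp [mem_setPartitions, hS]

lemma nonempty_of_mem_setPartitions (hS : S.Nonempty) (hR : R ∈ setPartitions S) :
    R.Nonempty := by
  rw [nonempty_iff_ne_empty]
  rintro rfl
  simp [mem_setPartitions, hS.ne_empty.symm] at hR

lemma exists_unique_mem_of_mem_setPartitions (hR : R ∈ setPartitions S) {x : α} (hx : x ∈ S) :
    ∃! B, B ∈ R ∧ x ∈ B := by
  obtain ⟨-, hdisj, hsup⟩ := mem_setPartitions.1 hR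
  obtain ⟨B, hB, hxB⟩ := mem_sup.1 (hsup ▸ hx)
  refine ⟨B, ⟨hB, hxB⟩, fun B' ⟨hB', hxB'⟩ => ?_⟩
  by_contra hne
  exact disjoint_left.1 (hdisj B' hB' B hB hne) hxB' hxB

lemma notMem_of_mem_setPartitions_sdiff (hD : D.Nonempty)
    (hτ : τ ∈ setPartitions (S \ D)) : D ∉ τ := by
  obtain ⟨y, hy⟩ := hD
  exact fun hDτ => (mem_sdiff.1 (subset_of_mem_setPartitions hτ hDτ hy)).2 hy

lemma insert_mem_setPartitions (hD : D.Nonempty) (hDS : D ⊆ S)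
    (hτ : τ ∈ setPartitions (S \ D)) : insert D τ ∈ setPartitions S := by
  obtain ⟨hne, hdisj, hsup⟩ := mem_setPartitions.1 hτ
  have hDdisj : ∀ B ∈ τ, Disjoint D B := fun B hB =>
    disjoint_of_subset_right (subset_of_mem_setPartitions hτ hB) disjoint_sdiff
  refine mem_setPartitions.2 ⟨?_, ?_, ?_⟩
  · simpa [hD] using hne
  · simp only [mem_insert]
    rintro B (rfl | hB) B' (rfl | hB') hBB'
    exacts [absurd rfl hBB', hDdisj B' hB', (hDdisj B hB).symm, hdisj B hB B' hB' hBB']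
  · rw [sup_insert, hsup, id, sup_eq_union, union_sdiff_of_subset hDS]

lemma erase_mem_setPartitions (hR : R ∈ setPartitions S) (hD : D ∈ R) :
    R.erase D ∈ setPartitions (S \ D) := by
  obtain ⟨hne, hdisj, hsup⟩ := mem_setPartitions.1 hR
  refine mem_setPartitions.2 ⟨fun B hB => hne B (mem_of_mem_erase hB),
    fun B hB B' hB' => hdisj B (mem_of_mem_erase hB) B' (mem_of_mem_erase hB'), ?_⟩
  have hsplit : R.sup id = D ∪ (R.erase D).sup id := by
    conv_lhs => rw [← insert_erase hD, sup_insert]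
    rfl
  rw [← hsup, hsplit, union_sdiff_cancel_left]
  exact Finset.disjoint_sup_right.2 fun B hB =>
    hdisj D hD B (mem_of_mem_erase hB) (ne_of_mem_erase hB).symm

variable {M : Type*} [AddCommMonoid M]

theorem sum_setPartitions_sum_mem (F : Finset α → Finset (Finset α) → M) :
    ∑ R ∈ setPartitions S, ∑ D ∈ R, F D R =
      ∑ D ∈ S.powerset with D.Nonempty, ∑ τ ∈ setPartitions (S \ D), F D (insert D τ) := by
  rw [sum_sigma', sum_sigma']
  refine sum_nbij' (fun p => ⟨p.2, p.1.erase p.2⟩) (fun p => ⟨insert p.1 p.2, p.1⟩) ?_ ?_ ?_ ?_ ?_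
  · rintro ⟨R, D⟩ h
    obtain ⟨hR, hD⟩ := mem_sigma.1 h
    exact mem_sigma.2 ⟨mem_filter.2 ⟨mem_powerset.2 (subset_of_mem_setPartitions hR hD),
      (mem_setPartitions.1 hR).1 D hD⟩, erase_mem_setPartitions hR hD⟩
  · rintro ⟨D, τ⟩ h
    obtain ⟨hD, hτ⟩ := mem_sigma.1 h
    obtain ⟨hDS, hDne⟩ := mem_filter.1 hD
    exact mem_sigma.2 ⟨insert_mem_setPartitions hDne (mem_powerset.1 hDS) hτ, mem_insert_self D τ⟩
  · rintro ⟨R, D⟩ h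
    simp only [insert_erase (mem_sigma.1 h).2]
  · rintro ⟨D, τ⟩ h
    obtain ⟨hD, hτ⟩ := mem_sigma.1 h
    simp only [erase_insert (notMem_of_mem_setPartitions_sdiff (mem_filter.1 hD).2 hτ)]
  · rintro ⟨R, D⟩ h
    simp only [insert_erase (mem_sigma.1 h).2]

theorem sum_setPartitions_eq_sum_block_mem {x : α} (hx : x ∈ S) (F : Finset (Finset α) → M) :
    ∑ R ∈ setPartitions S, F R =
      ∑ B ∈ S.powerset with x ∈ B, ∑ τ ∈ setPartitions (S \ B), F (insert B τ) := by
  have hblock : ∀ R ∈ setPartitions S, F R = ∑ D ∈ R, if x ∈ D then F R else 0 := by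
    intro R hR
    obtain ⟨B, ⟨hB, hxB⟩, huniq⟩ := exists_unique_mem_of_mem_setPartitions hR hx
    rw [sum_eq_single_of_mem B hB fun D hD hDB => if_neg fun hxD => hDB (huniq D ⟨hD, hxD⟩),
      if_pos hxB]
  rw [sum_congr rfl hblock, sum_setPartitions_sum_mem, sum_filter, sum_filter]
  refine sum_congr rfl fun D _ => ?_
  by_cases hxD : x ∈ D
  · simp [hxD, nonempty_of_ne_empty (ne_empty_of_mem hxD)]
  · simp [hxD]

end SetPartitions

section Cumulants

noncomputable def cumulantCoeff (n : ℕ) : ℝ := (-1) ^ (n - 1) * (n - 1).factorial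

lemma cumulantCoeff_succ_add_mul (n : ℕ) :
    cumulantCoeff (n + 1) + n * cumulantCoeff n = if n = 0 then 1 else 0 := by
  rcases n with _ | n
  · simp [cumulantCoeff]
  · simp only [cumulantCoeff, Nat.add_sub_cancel, Nat.factorial_succ, pow_succ]
    push_cast
    ring

variable (a : Finset α → ℝ) {S : Finset α} {x : α}

lemma cumulantFamily_eq_sum_cumulantCoeff (S : Finset α) :
    cumulantFamily a S = ∑ R ∈ setPartitions S, cumulantCoeff #R * ∏ B ∈ R, a B :=
  rfl

lemma filter_notMem_eq_erase_of_mem_setPartitions {R : Finset (Finset α)}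
    (hR : R ∈ setPartitions S) (hx : x ∈ S) : ∃ B ∈ R, {D ∈ R | x ∉ D} = R.erase B := by
  obtain ⟨B, ⟨hB, hxB⟩, huniq⟩ := exists_unique_mem_of_mem_setPartitions hR hx
  refine ⟨B, hB, ?_⟩
  ext D
  simp only [mem_filter, mem_erase]
  constructor
  · rintro ⟨hD, hxD⟩
    exact ⟨fun h => hxD (h ▸ hxB), hD⟩
  · rintro ⟨hDB, hD⟩
    exact ⟨hD, fun hxD => hDB (huniq D ⟨hD, hxD⟩)⟩

lemma sum_cumulantFamily_mul_sdiff (hx : x ∈ S) :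
    ∑ B ∈ {B ∈ S.powerset | x ∈ B}.erase S, cumulantFamily a B * a (S \ B) =
      ∑ R ∈ setPartitions S, (#R - 1 : ℕ) * cumulantCoeff (#R - 1) * ∏ B ∈ R, a B := by
  calc _ = ∑ D ∈ S.powerset with D.Nonempty,
        if x ∉ D then a D * cumulantFamily a (S \ D) else 0 := by
        rw [sum_ite, sum_const_zero, add_zero, filter_filter]
        refine sum_nbij' (S \ ·) (S \ ·) ?_ ?_ ?_ ?_ ?_ <;>
          simp only [mem_erase, mem_filter, mem_powerset, mem_sdiff]
        · rintro B ⟨hBS, hB, hxB⟩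
          exact ⟨sdiff_subset, sdiff_nonempty.2 fun h => hBS (subset_antisymm hB h),
            fun h => h.2 hxB⟩
        · rintro D ⟨hD, hDne, hxD⟩
          exact ⟨(sdiff_ssubset hD hDne).ne, sdiff_subset, hx, hxD⟩
        · exact fun B ⟨_, hB, _⟩ => Finset.sdiff_sdiff_eq_self hB
        · exact fun D ⟨hD, _⟩ => Finset.sdiff_sdiff_eq_self hD
        · exact fun B ⟨_, hB, _⟩ => by rw [Finset.sdiff_sdiff_eq_self hB, mul_comm]
    _ = ∑ D ∈ S.powerset with D.Nonempty, ∑ τ ∈ setPartitions (S \ D),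
          if x ∉ D then cumulantCoeff (#(insert D τ) - 1) * ∏ B ∈ insert D τ, a B else 0 := by
        refine sum_congr rfl fun D hD => ?_
        split_ifs
        · simp
        · rw [cumulantFamily_eq_sum_cumulantCoeff, mul_sum]
          refine sum_congr rfl fun τ hτ => ?_
          have hDτ := notMem_of_mem_setPartitions_sdiff (mem_filter.1 hD).2 hτ
          rw [prod_insert hDτ, card_insert_of_notMem hDτ, Nat.add_sub_cancel]
          ring
    _ = ∑ R ∈ setPartitions S, ∑ D ∈ R,
          if x ∉ D then cumulantCoeff (#R - 1) * ∏ B ∈ R, a B else 0 :=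
        (sum_setPartitions_sum_mem fun D R =>
          if x ∉ D then cumulantCoeff (#R - 1) * ∏ B ∈ R, a B else 0).symm
    _ = _ := by
        refine sum_congr rfl fun R hR => ?_
        obtain ⟨B, hB, hfilter⟩ := filter_notMem_eq_erase_of_mem_setPartitions hR hx
        rw [← sum_filter, hfilter, sum_const, card_erase_of_mem hB, nsmul_eq_mul, mul_assoc]

theorem sum_cumulantFamily_mul_ite_sdiff (hx : x ∈ S) :
    ∑ B ∈ S.powerset with x ∈ B, cumulantFamily a B * (if B = S then 1 else a (S \ B)) =
      a S := by
  have hSmem : S ∈ {B ∈ S.powerset | x ∈ B} := mem_filter.2 ⟨mem_powerset_self S, hx⟩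
  rw [← add_sum_erase _ _ hSmem, if_pos rfl, mul_one,
    sum_congr rfl fun B hB => by rw [if_neg (ne_of_mem_erase hB)],
    sum_cumulantFamily_mul_sdiff a hx, cumulantFamily_eq_sum_cumulantCoeff, ← sum_add_distrib]
  calc _ = ∑ R ∈ setPartitions S, if #R = 1 then ∏ B ∈ R, a B else 0 := by
        refine sum_congr rfl fun R hR => ?_
        obtain ⟨n, hn⟩ : ∃ n, #R = n + 1 :=
          Nat.exists_eq_add_one.2 (card_pos.2 (nonempty_of_mem_setPartitions ⟨x, hx⟩ hR))
        rw [hn, Nat.add_sub_cancel, ← add_mul, cumulantCoeff_succ_add_mul]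
        simp
    _ = a S := by
        rw [sum_eq_single_of_mem {S} (singleton_mem_setPartitions ⟨x, hx⟩)]
        · simp
        · exact fun R hR hRS => if_neg fun h => hRS (eq_singleton_of_mem_setPartitions hR h)

end Cumulants

theorem cumulant_inversion_general (a : Finset α → ℝ) (S : Finset α) (hS : S.Nonempty) :
    a S = ∑ P ∈ setPartitions S, ∏ B ∈ P, cumulantFamily a B := by
  induction S using Finset.strongInduction with
  | H S ih =>
  obtain ⟨x, hx⟩ := hS
  have hsplit : ∀ B ∈ {B ∈ S.powerset | x ∈ B},
      ∑ τ ∈ setPartitions (S \ B), ∏ C ∈ insert B τ, cumulantFamily a C =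
        cumulantFamily a B * if B = S then 1 else a (S \ B) := by
    intro B hB
    obtain ⟨hBS, hxB⟩ := mem_filter.1 hB
    rw [sum_congr rfl fun τ hτ => prod_insert (notMem_of_mem_setPartitions_sdiff ⟨x, hxB⟩ hτ),
      ← mul_sum]
    split_ifs with hBeq
    · simp [hBeq, setPartitions_empty]
    · rw [ih (S \ B) (sdiff_ssubset (mem_powerset.1 hBS) ⟨x, hxB⟩)
        (sdiff_nonempty.2 fun h => hBeq (subset_antisymm (mem_powerset.1 hBS) h))]
  rw [sum_setPartitions_eq_sum_block_mem hx, sum_congr rfl hsplit,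
    sum_cumulantFamily_mul_ite_sdiff a hx]

/-- **Inversion formula for cumulants.** -/
theorem cumulant_inversion (I : Finset α) (hI : I.Nonempty) (a : Finset α → ℝ)
    (S : Finset α) (hSI : S ⊆ I) (hS : S.Nonempty) :
    a S = ∑ P ∈ setPartitions S, ∏ B ∈ P, cumulantFamily a B :=
  cumulant_inversion_general a S hS
end

section
/- For every n ≥ 1 there exist a map π from the set C_n of connected graphs on {1,…,n} to the set T_n of trees on {1,…,n} and a map R : T_n → C_n such that for every tree T ∈ T_n one has E(T) ⊆ E(R(T)) and the fiber of π over T is exactly π⁻¹({T}) = {G ∈ C_n : E(T) ⊆ E(G) ⊆ E(R(T))}; in particular π(T) = T for every tree T (a tree partition scheme in the sense of Penrose). -/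
/-!
Fix an injective weight `w` on edges and let `R(T)` add to a tree `T` every edge that is heavier
than all edges of the `T`-path between its ends; `π(G)` is then the unique tree `T` with
`T ≤ G ≤ R(T)`. For existence, delete the heaviest non-bridge edge `m` of `G` and recurse: every
edge of the tree path joining the ends of `m` lies on a cycle with `m`, so it is a lighter
non-bridge and `m ∈ R(T)`. For uniqueness, if `T₁ ≤ R(T₂)`, `T₂ ≤ R(T₁)` and `e ∈ T₁ \ T₂`, then
the `T₂`-path between the ends of `e` crosses the cut of `T₁ - e` along an edge `f ∉ T₁`, and
`e ∈ R(T₂)`, `f ∈ R(T₁)` give both `w f < w e` and `w e < w f`.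
-/

open Function SimpleGraph

namespace SimpleGraph

variable {V α : Type*} [LinearOrder α] (w : Sym2 V → α)

/-- For a tree `T` these are the externally active edges of Tutte, for the reversed order. -/
def externallyActive (T : SimpleGraph V) : Set (Sym2 V) :=
  {e | ∀ ⦃u v⦄ (p : T.Walk u v), p.IsPath → s(u, v) = e → ∀ f ∈ p.edges, w f < w e}

/-- Penrose's `R(T)`. -/
def activeCompletion (T : SimpleGraph V) : SimpleGraph V :=
  T ⊔ fromEdgeSet (externallyActive w T)

variable {w}

lemma le_activeCompletion (T : SimpleGraph V) : T ≤ activeCompletion w T := le_sup_left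

lemma mem_edgeSet_activeCompletion {T : SimpleGraph V} {e : Sym2 V} :
    e ∈ (activeCompletion w T).edgeSet ↔ e ∈ T.edgeSet ∨ e ∈ externallyActive w T ∧ ¬e.IsDiag := by
  simp only [activeCompletion, edgeSet_sup, edgeSet_fromEdgeSet, Set.mem_union, Set.mem_sdiff,
    Sym2.mem_diagSet]

lemma Walk.IsPath.not_isBridge_of_mem_edges {G : SimpleGraph V} {u v : V} {p : G.Walk u v}
    (hp : p.IsPath) (huv : G.Adj u v) (hne : s(u, v) ∉ p.edges) {f : Sym2 V} (hf : f ∈ p.edges) :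
    ¬G.IsBridge f := fun hb ↦
  hb.notMem_edges_of_isCycle ((Walk.cons_isCycle_iff p huv.symm).2 ⟨hp, by rwa [Sym2.eq_swap]⟩)
    (List.mem_cons_of_mem _ hf)

lemma mem_edges_of_not_reachable_deleteEdges {G : SimpleGraph V} {a b x y : V}
    (h : ¬(G.deleteEdges {s(a, b)}).Reachable x y) (q : G.Walk x y) : s(a, b) ∈ q.edges := by
  simp only [reachable_deleteEdges_iff_exists_walk, not_exists, not_not] at h
  exact h q

lemma mem_externallyActive_of_forall_lt {G T : SimpleGraph V} (hTG : T ≤ G) {e : Sym2 V}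
    (he : e ∈ G.edgeSet) (heT : e ∉ T.edgeSet)
    (h_lt : ∀ f ∈ G.edgeSet, ¬G.IsBridge f → f ≠ e → w f < w e) : e ∈ externallyActive w T := by
  rintro a b p hp rfl f hf
  have hfT : f ∈ T.edgeSet := p.edges_subset_edgeSet hf
  have hab : s(a, b) ∉ (p.mapLe hTG).edges := by
    rw [Walk.edges_mapLe_eq_edges]
    exact fun hab ↦ heT (p.edges_subset_edgeSet hab)
  refine h_lt f (edgeSet_mono hTG hfT) ?_ (ne_of_mem_of_not_mem hfT heT)
  exact (hp.mapLe hTG).not_isBridge_of_mem_edges he hab (by rwa [Walk.edges_mapLe_eq_edges])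

theorem IsTree.le_of_le_activeCompletion {T₁ T₂ : SimpleGraph V} (h₁ : T₁.IsTree)
    (h₂ : T₂.Connected) (h₁₂ : T₁ ≤ activeCompletion w T₂) (h₂₁ : T₂ ≤ activeCompletion w T₁) :
    T₁ ≤ T₂ := by
  intro a b hab
  by_contra hab₂
  obtain ⟨p, hp⟩ := h₂.exists_isPath a b
  obtain ⟨⟨⟨x, y⟩, hxy⟩, hd, hx, hy⟩ := p.exists_boundary_dart
    {x | (T₁.deleteEdges {s(a, b)}).Reachable a x} (Reachable.refl a)
    (isAcyclic_iff_forall_adj_isBridge.1 h₁.isAcyclic hab)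
  have hxy_edges : s(x, y) ∈ p.edges := List.mem_map_of_mem hd
  have hxy₁ : ¬T₁.Adj x y := fun h ↦ hy <| hx.trans <| Adj.reachable <|
    deleteEdges_adj.2 ⟨h, fun hxy_ab ↦ hab₂ <| by
      rw [← mem_edgeSet, ← Set.mem_singleton_iff.1 hxy_ab]
      exact hxy⟩
  have hab_active : s(a, b) ∈ externallyActive w T₂ :=
    ((mem_edgeSet_activeCompletion.1 (h₁₂ hab)).resolve_left hab₂).1
  have hxy_active : s(x, y) ∈ externallyActive w T₁ :=
    ((mem_edgeSet_activeCompletion.1 (h₂₁ hxy)).resolve_left hxy₁).1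
  obtain ⟨q, hq⟩ := h₁.connected.exists_isPath x y
  have hab_q : s(a, b) ∈ q.edges :=
    mem_edges_of_not_reachable_deleteEdges (fun h ↦ hy (hx.trans h)) q
  exact (hab_active p hp rfl _ hxy_edges).asymm (hxy_active q hq rfl _ hab_q)

theorem IsTree.eq_of_le_activeCompletion {T₁ T₂ : SimpleGraph V} (h₁ : T₁.IsTree)
    (h₂ : T₂.IsTree) (h₁₂ : T₁ ≤ activeCompletion w T₂) (h₂₁ : T₂ ≤ activeCompletion w T₁) :
    T₁ = T₂ :=
  le_antisymm (h₁.le_of_le_activeCompletion h₂.connected h₁₂ h₂₁)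
    (h₂.le_of_le_activeCompletion h₁.connected h₂₁ h₁₂)

theorem Connected.exists_isTree_le_le_activeCompletion [Finite V] (hw : Injective w)
    {G : SimpleGraph V} (hG : G.Connected) :
    ∃ T : SimpleGraph V, T.IsTree ∧ T ≤ G ∧ G ≤ activeCompletion w T := by
  induction G using WellFoundedLT.induction with
  | ind G ih =>
  by_cases hG_acyclic : G.IsAcyclic
  · exact ⟨G, ⟨hG, hG_acyclic⟩, le_rfl, le_activeCompletion G⟩
  obtain ⟨m, ⟨hmG, hm⟩, hm_max⟩ := Set.exists_max_image {e | e ∈ G.edgeSet ∧ ¬G.IsBridge e} w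
    (Set.toFinite _) (by simpa [isAcyclic_iff_forall_isBridge, Set.Nonempty] using hG_acyclic)
  obtain ⟨u, v⟩ := m
  obtain ⟨T, hT, hTG', hG'T⟩ := ih (G.deleteEdges {s(u, v)})
    (edgeSet_ssubset_edgeSet.1 ⟨edgeSet_mono (deleteEdges_le _), fun h ↦ by simpa using h hmG⟩)
    (hG.connected_delete_edge_of_not_isBridge hm)
  have hmT : s(u, v) ∉ T.edgeSet := fun h ↦ by simpa using edgeSet_mono hTG' h
  have hTG : T ≤ G := hTG'.trans (deleteEdges_le _)
  refine ⟨T, hT, hTG, fun x y hxy ↦ ?_⟩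
  by_cases hxy_m : s(x, y) = s(u, v)
  · rw [← mem_edgeSet, hxy_m, mem_edgeSet_activeCompletion]
    refine Or.inr ⟨mem_externallyActive_of_forall_lt hTG hmG hmT fun f hfG hf hfm ↦ ?_,
      G.not_isDiag_of_mem_edgeSet hmG⟩
    exact (hm_max f ⟨hfG, hf⟩).lt_of_ne (hw.ne hfm)
  · exact hG'T (deleteEdges_adj.2 ⟨hxy, hxy_m⟩)

end SimpleGraph

theorem penrose_tree_partition_scheme_general (n : ℕ) :
    ∃ (π : {G : SimpleGraph (Fin n) // G.Connected} → {T : SimpleGraph (Fin n) // T.IsTree})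
      (R : {T : SimpleGraph (Fin n) // T.IsTree} → {G : SimpleGraph (Fin n) // G.Connected}),
      (∀ T : {T : SimpleGraph (Fin n) // T.IsTree},
        (T : SimpleGraph (Fin n)).edgeSet ⊆ (R T : SimpleGraph (Fin n)).edgeSet) ∧
      (∀ (T : {T : SimpleGraph (Fin n) // T.IsTree})
          (G : {G : SimpleGraph (Fin n) // G.Connected}),
        π G = T ↔
          (T : SimpleGraph (Fin n)).edgeSet ⊆ (G : SimpleGraph (Fin n)).edgeSet ∧
          (G : SimpleGraph (Fin n)).edgeSet ⊆ (R T : SimpleGraph (Fin n)).edgeSet) ∧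
      (∀ T : {T : SimpleGraph (Fin n) // T.IsTree}, π ⟨T.1, T.2.isConnected⟩ = T) := by
  obtain ⟨w, hw⟩ := Countable.exists_injective_nat (Sym2 (Fin n))
  choose π hπ using fun G : {G : SimpleGraph (Fin n) // G.Connected} ↦
    G.2.exists_isTree_le_le_activeCompletion hw
  let R (T : {T : SimpleGraph (Fin n) // T.IsTree}) : {G : SimpleGraph (Fin n) // G.Connected} :=
    ⟨activeCompletion w T, T.2.connected.mono (le_activeCompletion _)⟩
  have hπ_eq_iff (T : {T : SimpleGraph (Fin n) // T.IsTree})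
      (G : {G : SimpleGraph (Fin n) // G.Connected}) :
      (⟨π G, (hπ G).1⟩ : {T : SimpleGraph (Fin n) // T.IsTree}) = T ↔ T.1 ≤ G ∧ G.1 ≤ R T := by
    obtain ⟨hπT, hπG, hGπ⟩ := hπ G
    refine ⟨fun h ↦ h ▸ ⟨hπG, hGπ⟩, fun ⟨hTG, hGT⟩ ↦ Subtype.ext ?_⟩
    exact hπT.eq_of_le_activeCompletion T.2 (hπG.trans hGT) (hTG.trans hGπ)
  refine ⟨fun G ↦ ⟨π G, (hπ G).1⟩, R, fun T ↦ edgeSet_mono (le_activeCompletion _),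
    fun T G ↦ by simp only [hπ_eq_iff, edgeSet_subset_edgeSet], fun T ↦ ?_⟩
  exact (hπ_eq_iff T _).2 ⟨le_rfl, le_activeCompletion _⟩

theorem penrose_tree_partition_scheme (n : ℕ) (hn : 1 ≤ n) :
    ∃ (π : {G : SimpleGraph (Fin n) // G.Connected} → {T : SimpleGraph (Fin n) // T.IsTree})
      (R : {T : SimpleGraph (Fin n) // T.IsTree} → {G : SimpleGraph (Fin n) // G.Connected}),
      (∀ T : {T : SimpleGraph (Fin n) // T.IsTree},
        (T : SimpleGraph (Fin n)).edgeSet ⊆ (R T : SimpleGraph (Fin n)).edgeSet) ∧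
      (∀ (T : {T : SimpleGraph (Fin n) // T.IsTree})
          (G : {G : SimpleGraph (Fin n) // G.Connected}),
        π G = T ↔
          (T : SimpleGraph (Fin n)).edgeSet ⊆ (G : SimpleGraph (Fin n)).edgeSet ∧
          (G : SimpleGraph (Fin n)).edgeSet ⊆ (R T : SimpleGraph (Fin n)).edgeSet) ∧
      (∀ T : {T : SimpleGraph (Fin n) // T.IsTree}, π ⟨T.1, T.2.isConnected⟩ = T) :=
  penrose_tree_partition_scheme_general n
end

section
/- For every n ≥ 2, the number of trees on the vertex set {1,…,n} equals n^{n−2} (Cayley's formula). -/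
/-!
Prüfer codes. From a tree on a finite vertex set `S` with at least three vertices, remove a leaf
`ℓ` chosen by a fixed rule and record its neighbour `a`: what remains is a tree on `S \ {ℓ}`.
Iterating down to two vertices yields a word of length `#S - 2` over `S`. The word determines the
tree, because the leaves of the tree are exactly the vertices of `S` that do not occur in the word:
this identifies `ℓ`, then `a` is the first letter and the rest is decoded recursively. So the trees
on `S` are in bijection with the `#S ^ (#S - 2)` such words.
-/

open Finset

lemma Nat.card_lists_length_eq_forall_mem {V : Type*} (S : Finset V) (k : ℕ) :
    Nat.card {l : List V // l.length = k ∧ ∀ x ∈ l, x ∈ S} = #S ^ k := by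
  let e : {l : List V // l.length = k ∧ ∀ x ∈ l, x ∈ S} ≃ List.Vector S k :=
    { toFun l := ⟨l.1.pmap Subtype.mk l.2.2, by simp [l.2.1]⟩
      invFun w := ⟨w.1.map (↑), by simp, by simp +contextual⟩
      left_inv l := by ext1; simp [List.map_pmap]
      right_inv w := Subtype.ext <| List.ext_getElem (by simp) (by simp) }
  rw [Nat.card_congr e, Nat.card_eq_fintype_card, card_vector, Fintype.card_coe]

namespace SimpleGraph

variable {V : Type*} {G : SimpleGraph V} {u v ℓ a : V}

lemma Reachable.mem_support (h : G.Reachable u v) (huv : u ≠ v) : u ∈ G.support :=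
  h.elim fun p ↦ (p.adj_snd (Walk.not_nil_of_ne huv)).left_mem_support

def leafSet (G : SimpleGraph V) : Set V := {v | ∃! w, G.Adj v w}

lemma sup_edge_adj_of_ne (hvℓ : v ≠ ℓ) (hva : v ≠ a) : (G ⊔ edge ℓ a).Adj v u ↔ G.Adj v u := by
  simp [edge_adj, hvℓ, hva]

lemma sup_edge_adj_left (hℓ : ℓ ∉ G.support) (hℓa : ℓ ≠ a) :
    (G ⊔ edge ℓ a).Adj ℓ u ↔ u = a := by
  rw [G.mem_support, not_exists] at hℓ
  simp only [sup_adj, hℓ, edge_adj, false_or]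
  grind

lemma leafSet_sup_edge (hℓ : ℓ ∉ G.support) (ha : a ∈ G.support) :
    (G ⊔ edge ℓ a).leafSet = insert ℓ (G.leafSet \ {a}) := by
  have hℓa : ℓ ≠ a := by rintro rfl; exact hℓ ha
  ext v
  by_cases hvℓ : v = ℓ
  · subst hvℓ
    simp only [leafSet, Set.mem_ofPred_eq, sup_edge_adj_left hℓ hℓa, Set.mem_insert_iff, true_or,
      iff_true]
    exact existsUnique_eq
  by_cases hva : v = a
  · subst hva
    obtain ⟨b, hb⟩ := G.mem_support.mp ha
    have hbℓ : b ≠ ℓ := by rintro rfl; exact hℓ hb.symm.left_mem_support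
    simp only [leafSet, Set.mem_insert_iff, hvℓ, Set.mem_sdiff, Set.mem_singleton_iff, not_true,
      and_false, or_false, Set.mem_ofPred_eq, iff_false]
    rintro ⟨w, -, hw⟩
    exact hbℓ ((hw b (Or.inl hb)).trans (hw ℓ (Or.inr (by simp [edge_adj, hℓa.symm]))).symm)
  · simp only [leafSet, Set.mem_ofPred_eq, sup_edge_adj_of_ne hvℓ hva, Set.mem_insert_iff, hvℓ,
      Set.mem_sdiff, Set.mem_singleton_iff, hva, false_or, not_false_eq_true, and_true]

lemma leafSet_edge {x y : V} (hxy : x ≠ y) : (edge x y).leafSet = {x, y} := by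
  ext v
  simp only [leafSet, edge_adj, Set.mem_ofPred_eq, Set.mem_insert_iff, Set.mem_singleton_iff]
  constructor
  · rintro ⟨w, hw, -⟩
    grind
  · rintro (rfl | rfl)
    · exact ⟨y, by grind, by grind⟩
    · exact ⟨x, by grind, by grind⟩

lemma eq_of_sup_edge_eq_sup_edge {G₁ G₂ : SimpleGraph V} {a₁ a₂ : V} (h₁ : ℓ ∉ G₁.support)
    (h₂ : ℓ ∉ G₂.support) (hℓa₁ : ℓ ≠ a₁) (hℓa₂ : ℓ ≠ a₂)
    (h : G₁ ⊔ edge ℓ a₁ = G₂ ⊔ edge ℓ a₂) : a₁ = a₂ ∧ G₁ = G₂ := by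
  have ha : a₁ = a₂ := by
    have := sup_edge_adj_left h₁ hℓa₁ (u := a₂)
    rw [h, sup_edge_adj_left h₂ hℓa₂] at this
    exact (this.mp rfl).symm
  subst ha
  have hn₁ : ¬G₁.Adj ℓ a₁ := fun h ↦ h₁ h.left_mem_support
  have hn₂ : ¬G₂.Adj ℓ a₁ := fun h ↦ h₂ h.left_mem_support
  refine ⟨rfl, ?_⟩
  rw [← sdiff_edge (G := G₁) hn₁, ← sdiff_edge (G := G₂) hn₂, ← sup_sdiff_right_self, h,
    sup_sdiff_right_self]

/-- Trees are taken on a finite set `S` of vertices of a fixed type, the vertices outside `S`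
being isolated, so that a leaf can be removed without changing the type of vertices. -/
structure IsTreeOn (S : Finset V) (G : SimpleGraph V) : Prop where
  support_subset : G.support ⊆ S
  isAcyclic : G.IsAcyclic
  reachable : ∀ u ∈ S, ∀ v ∈ S, G.Reachable u v

lemma isTreeOn_univ_iff [Fintype V] [Nonempty V] : IsTreeOn univ G ↔ G.IsTree :=
  ⟨fun h ↦ ⟨⟨fun u v ↦ h.reachable u (mem_univ u) v (mem_univ v)⟩, h.isAcyclic⟩,
    fun h ↦ ⟨by simp, h.isAcyclic, fun u _ v _ ↦ h.connected u v⟩⟩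

lemma isTreeOn_singleton_bot (v : V) : IsTreeOn {v} ⊥ where
  support_subset := by simp
  isAcyclic := isAcyclic_bot
  reachable := by simp

namespace IsTreeOn

variable {S : Finset V}

lemma mem_support (hG : IsTreeOn S G) (hS : S.Nontrivial) (ha : a ∈ S) : a ∈ G.support := by
  obtain ⟨b, hb, hba⟩ := hS.exists_ne a
  exact (hG.reachable a ha b hb).mem_support hba.symm

lemma finite_edgeSet (hG : IsTreeOn S G) : G.edgeSet.Finite := by
  refine (S.sym2 : Set (Sym2 V)).toFinite.subset fun e he ↦ ?_
  induction e using Sym2.ind with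
  | _ u v =>
    exact mk_mem_sym2_iff.mpr ⟨hG.support_subset (G.mem_support.mpr ⟨v, he⟩),
      hG.support_subset (G.mem_support.mpr ⟨u, he.symm⟩)⟩

/-- An end of a longest path is a leaf. -/
lemma leafSet_nonempty (hG : IsTreeOn S G) (hS : S.Nontrivial) : G.leafSet.Nonempty := by
  have := hG.finite_edgeSet.to_subtype
  have : Nonempty V := ⟨hS.nonempty.choose⟩
  obtain ⟨u, v, p, hp, hmax⟩ := Walk.exists_isPath_forall_isPath_length_le_length G
  obtain ⟨x, hx, y, hy, hxy⟩ := hS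
  obtain ⟨q, hq⟩ := (hG.reachable x hx y hy).exists_isPath
  have hnil : ¬p.Nil := fun h ↦ hxy <| q.eq_of_length_eq_zero <| by
    have := hmax x y q hq
    rw [Walk.length_eq_zero_iff.mpr h] at this
    omega
  refine ⟨u, _, p.adj_snd hnil, fun w hw ↦ hG.isAcyclic.eq_snd_of_adj_start hp hw ?_⟩
  by_contra hwp
  have := hmax _ _ _ (hp.cons hwp (h := hw.symm))
  rw [Walk.length_cons] at this
  omega

variable [DecidableEq V]

lemma sup_edge (hG : IsTreeOn S G) (hℓ : ℓ ∉ S) (ha : a ∈ S) :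
    IsTreeOn (insert ℓ S) (G ⊔ edge ℓ a) where
  support_subset v hv := by
    obtain ⟨w, hw⟩ := (G ⊔ edge ℓ a).mem_support.mp hv
    rcases hw with hw | hw
    · exact mem_insert_of_mem (hG.support_subset hw.left_mem_support)
    · rw [edge_adj] at hw
      rcases hw.1 with ⟨rfl, -⟩ | ⟨rfl, -⟩
      · exact mem_insert_self _ _
      · exact mem_insert_of_mem ha
  isAcyclic := by
    refine hG.isAcyclic.sup_edge_of_not_reachable fun h ↦ hℓ (hG.support_subset ?_)
    exact h.mem_support (by rintro rfl; exact hℓ ha)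
  reachable := by
    have hreach_a : ∀ v ∈ insert ℓ S, (G ⊔ edge ℓ a).Reachable v a := by
      intro v hv
      rcases mem_insert.mp hv with rfl | hv
      · exact Adj.reachable (Or.inr ((edge_adj _ _ _ _).mpr
          ⟨Or.inl ⟨rfl, rfl⟩, by rintro rfl; exact hℓ ha⟩))
      · exact (hG.reachable v hv a ha).mono le_sup_left
    exact fun u hu v hv ↦ (hreach_a u hu).trans (hreach_a v hv).symm

/-- A path between two other vertices cannot pass through a leaf. -/
lemma sdiff_edge (hG : IsTreeOn S G) (hℓa : G.Adj ℓ a) (hℓ : ℓ ∈ G.leafSet) :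
    IsTreeOn (S.erase ℓ) (G \ edge ℓ a) where
  support_subset v hv := by
    obtain ⟨w, hw, hvw⟩ := (G \ edge ℓ a).mem_support.mp hv
    refine mem_erase.mpr ⟨?_, hG.support_subset hw.left_mem_support⟩
    rintro rfl
    exact hvw ((edge_adj _ _ _ _).mpr ⟨Or.inl ⟨rfl, hℓ.unique hw hℓa⟩, hw.ne⟩)
  isAcyclic := hG.isAcyclic.anti sdiff_le
  reachable u hu v hv := by
    obtain ⟨huℓ, hu⟩ := mem_erase.mp hu
    obtain ⟨hvℓ, hv⟩ := mem_erase.mp hv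
    obtain ⟨p, hp⟩ := (hG.reachable u hu v hv).exists_isPath
    have hℓp : ℓ ∉ p.support := hp.isTrail.not_mem_support_of_subsingleton_neighborSet
      (Ne.symm huℓ) (Ne.symm hvℓ) fun x hx y hy ↦ hℓ.unique hx hy
    exact ⟨p.toDeleteEdge s(ℓ, a) fun he ↦ hℓp (p.fst_mem_support_of_mem_edges he)⟩

lemma eq_edge {x y : V} (hG : IsTreeOn {x, y} G) (hxy : x ≠ y) : G = edge x y := by
  have hmem : ∀ {u v}, G.Adj u v → (u = x ∨ u = y) ∧ (v = x ∨ v = y) := fun h ↦ by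
    simpa using And.intro (hG.support_subset h.left_mem_support)
      (hG.support_subset h.right_mem_support)
  refine le_antisymm (fun u v h ↦ ?_) ((edge_le_iff (G := G)).mpr (Or.inr ?_))
  · have := h.ne
    have := hmem h
    rw [edge_adj]
    grind
  · obtain ⟨p⟩ := hG.reachable x (by simp) y (by simp)
    have hsnd := p.adj_snd (Walk.not_nil_of_ne hxy)
    have := hsnd.ne
    have := (hmem hsnd).2
    grind

lemma leafSet_sup_edge_eq {l : List V} (hG : IsTreeOn (S.erase ℓ) G)
    (hS : (S.erase ℓ).Nontrivial) (hℓ : ℓ ∈ S) (ha : a ∈ S.erase ℓ) (hl : ∀ x ∈ l, x ∈ S.erase ℓ)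
    (hleaf : G.leafSet = {v | v ∈ S.erase ℓ ∧ v ∉ l}) :
    (G ⊔ edge ℓ a).leafSet = {v | v ∈ S ∧ v ∉ a :: l} := by
  rw [leafSet_sup_edge (fun h ↦ notMem_erase ℓ S (hG.support_subset h)) (hG.mem_support hS ha),
    hleaf]
  have hℓl : ℓ ∉ l := fun h ↦ notMem_erase ℓ S (hl ℓ h)
  have haℓ : a ≠ ℓ := (mem_erase.mp ha).1
  ext v
  simp only [Set.mem_insert_iff, Set.mem_sdiff, Set.mem_ofPred_eq, mem_erase,
    Set.mem_singleton_iff, List.mem_cons, not_or]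
  grind

end IsTreeOn

lemma isTreeOn_edge [DecidableEq V] {x y : V} (hxy : x ≠ y) : IsTreeOn {x, y} (edge x y) := by
  simpa using (isTreeOn_singleton_bot y).sup_edge (by simpa using hxy) (mem_singleton_self y)

lemma fromEdgeSet_sym2_pair [DecidableEq V] (x y : V) :
    fromEdgeSet ({x, y} : Finset V).sym2 = edge x y := by
  ext u v
  simp only [fromEdgeSet_adj, mem_coe, mem_sym2_iff, edge_adj]
  simp
  grind

namespace Prufer

def IsCode (S : Finset V) (l : List V) : Prop := l.length + 2 = #S ∧ ∀ x ∈ l, x ∈ S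

variable {S : Finset V} {l : List V}

lemma IsCode.nontrivial (h : IsCode S l) : S.Nontrivial := by
  rw [← one_lt_card_iff_nontrivial, ← h.1]
  omega

lemma card_isCode (hS : 2 ≤ #S) : Nat.card {l // IsCode S l} = #S ^ (#S - 2) := by
  rw [← Nat.card_lists_length_eq_forall_mem]
  refine Nat.card_congr <| Equiv.subtypeEquivRight fun l ↦ ⟨fun h ↦ ⟨?_, h.2⟩, fun h ↦ ⟨?_, h.2⟩⟩
  · have := h.1
    omega
  · have := h.1
    omega

variable [Nonempty V]

/-- Any rule picking a vertex of `S` missing from `l` would do; the usual one takes the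
smallest. -/
noncomputable def firstLeaf (S : Finset V) (l : List V) : V :=
  Classical.epsilon fun v ↦ v ∈ S ∧ v ∉ l

lemma IsCode.firstLeaf_mem (h : IsCode S l) : firstLeaf S l ∈ S ∧ firstLeaf S l ∉ l := by
  classical
  obtain ⟨v, hv, hvl⟩ := exists_mem_notMem_of_card_lt_card (s := l.toFinset) (t := S)
    (by have := l.toFinset_card_le; have := h.1; omega)
  exact Classical.epsilon_spec (p := fun v ↦ v ∈ S ∧ v ∉ l) ⟨v, hv, by simpa using hvl⟩

variable [DecidableEq V]

/-- On two vertices, `fromEdgeSet S.sym2` (the complete graph on `S`) is the single edge. -/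
noncomputable def decode : Finset V → List V → SimpleGraph V
  | S, [] => fromEdgeSet S.sym2
  | S, a :: l => decode (S.erase (firstLeaf S (a :: l))) l ⊔ edge (firstLeaf S (a :: l)) a

lemma IsCode.tail (h : IsCode S (a :: l)) : IsCode (S.erase (firstLeaf S (a :: l))) l := by
  obtain ⟨hℓS, hℓl⟩ := h.firstLeaf_mem
  refine ⟨?_, fun x hx ↦ mem_erase.mpr ⟨?_, h.2 x (List.mem_cons_of_mem a hx)⟩⟩
  · rw [card_erase_of_mem hℓS, ← h.1, List.length_cons]
    omega
  · rintro rfl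
    exact hℓl (List.mem_cons_of_mem a hx)

lemma IsCode.head_mem (h : IsCode S (a :: l)) : a ∈ S.erase (firstLeaf S (a :: l)) := by
  obtain ⟨-, hℓl⟩ := h.firstLeaf_mem
  exact mem_erase.mpr ⟨fun ha ↦ hℓl (ha ▸ List.mem_cons_self), h.2 a List.mem_cons_self⟩

lemma isTreeOn_decode (h : IsCode S l) : IsTreeOn S (decode S l) := by
  induction l generalizing S with
  | nil =>
    obtain ⟨x, y, hxy, rfl⟩ := card_eq_two.mp (by simpa [IsCode] using h.1.symm)
    rw [decode, fromEdgeSet_sym2_pair]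
    exact isTreeOn_edge hxy
  | cons a l ih =>
    have := (ih h.tail).sup_edge (notMem_erase _ _) h.head_mem
    rwa [insert_erase h.firstLeaf_mem.1] at this

lemma IsCode.firstLeaf_notMem_support (h : IsCode S (a :: l)) :
    firstLeaf S (a :: l) ∉ (decode (S.erase (firstLeaf S (a :: l))) l).support :=
  fun hℓ ↦ notMem_erase _ _ ((isTreeOn_decode h.tail).support_subset hℓ)

lemma leafSet_decode (h : IsCode S l) : (decode S l).leafSet = {v | v ∈ S ∧ v ∉ l} := by
  induction l generalizing S with
  | nil =>
    obtain ⟨x, y, hxy, rfl⟩ := card_eq_two.mp (by simpa [IsCode] using h.1.symm)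
    rw [decode, fromEdgeSet_sym2_pair, leafSet_edge hxy]
    ext
    simp
  | cons a l ih =>
    exact (isTreeOn_decode h.tail).leafSet_sup_edge_eq h.tail.nontrivial h.firstLeaf_mem.1
      h.head_mem h.tail.2 (ih h.tail)

lemma decode_injective {l₁ l₂ : List V} (h₁ : IsCode S l₁) (h₂ : IsCode S l₂)
    (h : decode S l₁ = decode S l₂) : l₁ = l₂ := by
  induction l₁ generalizing S l₂ with
  | nil =>
    have := h₁.1.trans h₂.1.symm
    simp_all
  | cons a₁ r₁ ih =>
    cases l₂ with
    | nil => have := h₁.1.trans h₂.1.symm; simp at this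
    | cons a₂ r₂ =>
      have hfirst : firstLeaf S (a₁ :: r₁) = firstLeaf S (a₂ :: r₂) := by
        have := (leafSet_decode h₁).symm.trans ((congrArg leafSet h).trans (leafSet_decode h₂))
        exact congrArg (fun s : Set V ↦ Classical.epsilon (· ∈ s)) this
      have h₂' := h₂.firstLeaf_notMem_support
      rw [← hfirst] at h₂'
      rw [decode, decode, ← hfirst] at h
      obtain ⟨rfl, h'⟩ := eq_of_sup_edge_eq_sup_edge h₁.firstLeaf_notMem_support h₂'
        (fun he ↦ h₁.firstLeaf_mem.2 (he ▸ List.mem_cons_self))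
        (fun he ↦ h₂.firstLeaf_mem.2 (hfirst ▸ he ▸ List.mem_cons_self)) h
      rw [ih h₁.tail (hfirst ▸ h₂.tail) h']

lemma exists_decode_eq {G : SimpleGraph V} (hS : 2 ≤ #S) (hG : IsTreeOn S G) :
    ∃ l, IsCode S l ∧ decode S l = G := by
  obtain ⟨n, hn⟩ : ∃ n, #S = n + 2 := ⟨#S - 2, by omega⟩
  clear hS
  induction n generalizing S G with
  | zero =>
    obtain ⟨x, y, hxy, rfl⟩ := card_eq_two.mp hn
    exact ⟨[], ⟨by simp [hn], by simp⟩, by rw [decode, fromEdgeSet_sym2_pair, hG.eq_edge hxy]⟩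
  | succ n ih =>
    obtain ⟨ℓ, hℓ_def⟩ : ∃ ℓ, ℓ = Classical.epsilon (· ∈ G.leafSet) := ⟨_, rfl⟩
    have hℓ : ℓ ∈ G.leafSet := hℓ_def ▸
      Classical.epsilon_spec (hG.leafSet_nonempty (one_lt_card_iff_nontrivial.mp (by omega)))
    obtain ⟨a, hℓa, -⟩ := id hℓ
    have hℓS : ℓ ∈ S := hG.support_subset hℓa.left_mem_support
    have haS : a ∈ S.erase ℓ := mem_erase.mpr ⟨hℓa.ne', hG.support_subset hℓa.right_mem_support⟩
    have hG' := hG.sdiff_edge hℓa hℓ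
    have hcard : #(S.erase ℓ) = n + 2 := by rw [card_erase_of_mem hℓS]; omega
    obtain ⟨r, hr, hdecode⟩ := ih hG' hcard
    have hG_eq : (G \ edge ℓ a) ⊔ edge ℓ a = G := by
      rw [sdiff_sup_self, sup_edge_of_adj (G := G) hℓa]
    have hleaves : G.leafSet = {v | v ∈ S ∧ v ∉ a :: r} := by
      rw [← hG_eq]
      exact hG'.leafSet_sup_edge_eq (one_lt_card_iff_nontrivial.mp (by omega)) hℓS haS hr.2
        (hdecode ▸ leafSet_decode hr)
    have hfirst : firstLeaf S (a :: r) = ℓ := by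
      rw [hℓ_def, hleaves]
      rfl
    refine ⟨a :: r, ⟨?_, ?_⟩, by rw [decode, hfirst, hdecode, hG_eq]⟩
    · have := hr.1
      rw [List.length_cons]
      omega
    · exact List.forall_mem_cons.mpr
        ⟨mem_of_mem_erase haS, fun x hx ↦ mem_of_mem_erase (hr.2 x hx)⟩

end Prufer

lemma card_isTreeOn (S : Finset V) (hS : 2 ≤ #S) :
    Nat.card {G : SimpleGraph V // IsTreeOn S G} = #S ^ (#S - 2) := by
  classical
  have : Nonempty V := ⟨(card_pos.mp (by omega : 0 < #S)).choose⟩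
  let decode (l : {l // Prufer.IsCode S l}) : {G // IsTreeOn S G} :=
    ⟨Prufer.decode S l, Prufer.isTreeOn_decode l.2⟩
  have hdecode : decode.Bijective := by
    refine ⟨fun l₁ l₂ h ↦ Subtype.ext ?_, fun G ↦ ?_⟩
    · exact Prufer.decode_injective l₁.2 l₂.2 (congrArg Subtype.val h)
    · obtain ⟨l, hl, hlG⟩ := Prufer.exists_decode_eq hS G.2
      exact ⟨⟨l, hl⟩, Subtype.ext hlG⟩
  rw [← Nat.card_eq_of_bijective decode hdecode, Prufer.card_isCode hS]

lemma card_isTree [Fintype V] (hV : 2 ≤ Fintype.card V) :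
    Nat.card {T : SimpleGraph V // T.IsTree} = Fintype.card V ^ (Fintype.card V - 2) := by
  have : Nonempty V := Fintype.card_pos_iff.mp (by omega)
  rw [← card_univ, ← card_isTreeOn univ (by rwa [card_univ])]
  exact Nat.card_congr (Equiv.subtypeEquivRight fun G ↦ isTreeOn_univ_iff.symm)

end SimpleGraph

theorem cayley_formula (n : ℕ) (hn : 2 ≤ n) :
    Nat.card {T : SimpleGraph (Fin n) // T.IsTree} = n ^ (n - 2) := by
  simpa using SimpleGraph.card_isTree (V := Fin n) (by simpa using hn)
end

section
/- Let γ ∈ (2,3), α > 0, and let φ : [0,1] → ℝ be Lebesgue-measurable with B_α < ∞ (case T* = 1). Then there exist w, w' ∈ [0, 2α] such that |φ(1 − w') − φ(w)| ≤ (8√2 · γ/(γ−2)) · B_α^{1/4}. -/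
/-!
A chaining argument in the style of Garsia–Rodemich–Rumsey. With `16^{-(M+1)} < 2α ≤ 16^{-M}`, walk
from `0` to `1` through the blocks `I n = [5/8 · 16⁻ⁿ, 16⁻ⁿ]`, `n = M+1, …, 1`, and then through
their mirror images `1 - I n`, `n = 1, …, M+1`. Consecutive blocks are more than `α` apart, so the
cutoff in `B_α` is inactive between them, and a first-moment selection picks one point in each block
such that the kernel at consecutive points, times the product of the two block lengths, is at most
`4 B_α`. This bounds the increment of `φ` at scale `n` by `5 · 2^{-n(γ-2)} B_α^{1/4}` and the jump
from `I 1` to `1 - I 1` by `10 B_α^{1/4}`. Summing the two geometric series gives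
`|φ(1 - w') - φ(w)| ≤ 10 γ/(γ-2) · B_α^{1/4}`, and `10 ≤ 8√2`.
-/

open MeasureTheory

/-- The Garsia–Rodemich–Rumsey functional with `Ψ(u) = u⁴`, `p(u) = u^{γ/4}`, modified by the
cutoff `|t−s| > α`. -/
noncomputable def grrB (T γ α : ℝ) (φ : ℝ → ℝ) : ℝ :=
  ∫ p in Set.Icc (0 : ℝ) T ×ˢ Set.Icc (0 : ℝ) T,
    (if α < |p.1 - p.2| then |φ p.1 - φ p.2| ^ 4 / |p.1 - p.2| ^ γ else 0)

open Set
open scoped ENNReal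

theorem ENNReal.mul_le_mul_of_div_le_div {a b c m : ℝ≥0∞} (hm0 : m ≠ 0) (hm : m ≠ ∞)
    (hc0 : c ≠ 0) (hc : c ≠ ∞) (h : a / b ≤ c / m) : a * m ≤ c * b := by
  rcases eq_or_ne b ∞ with rfl | hb
  · simp [ENNReal.mul_top hc0]
  rw [ENNReal.div_le_iff_le_mul (Or.inr (ENNReal.div_ne_top hc hm0)) (Or.inl hb)] at h
  calc a * m ≤ c / m * b * m := by gcongr
    _ = c * b := by rw [mul_right_comm, ENNReal.div_mul_cancel hm0 hm]

section Selection

variable {X : Type*} [MeasurableSpace X] {μ : Measure X}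

/-- Take `x` below the mean of `g / ∫ g + h / ∫ h`, which is at most `2 / μ s`. -/
theorem exists_mem_mul_measure_le_two_mul_setLIntegral {s : Set X} (hs0 : μ s ≠ 0)
    (hs : μ s ≠ ∞) {g h : X → ℝ≥0∞} (hg : AEMeasurable g (μ.restrict s))
    (hh : AEMeasurable h (μ.restrict s)) :
    ∃ x ∈ s, g x * μ s ≤ 2 * ∫⁻ y in s, g y ∂μ ∧ h x * μ s ≤ 2 * ∫⁻ y in s, h y ∂μ := by
  set G := ∫⁻ y in s, g y ∂μ
  set H := ∫⁻ y in s, h y ∂μ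
  have hint : ∫⁻ y in s, (g y / G + h y / H) ∂μ ≤ 2 := by
    simp only [div_eq_mul_inv]
    rw [lintegral_add_left' (hg.mul_const _), lintegral_mul_const'' _ hg,
      lintegral_mul_const'' _ hh, ← one_add_one_eq_two]
    exact add_le_add (ENNReal.mul_inv_le_one _) (ENNReal.mul_inv_le_one _)
  obtain ⟨x, hxs, hx⟩ := exists_le_setLAverage hs0 hs ((hg.div_const G).add (hh.div_const H))
  have hx2 : g x / G + h x / H ≤ 2 / μ s :=
    hx.trans ((setLAverage_eq μ _ s).trans_le (ENNReal.div_le_div_right hint _))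
  exact ⟨x, hxs,
    ENNReal.mul_le_mul_of_div_le_div hs0 hs two_ne_zero ENNReal.ofNat_ne_top
      (le_self_add.trans hx2),
    ENNReal.mul_le_mul_of_div_le_div hs0 hs two_ne_zero ENNReal.ofNat_ne_top
      (le_add_self.trans hx2)⟩

/-- Each `p (k + 1)` is chosen so that it closes the link from `p k` well and its own slice
integral over `J (k + 2)` is small. -/
theorem exists_seq_mem_mul_measure_le [SFinite μ] {J : ℕ → Set X} (hJ0 : ∀ k, μ (J k) ≠ 0)
    (hJ : ∀ k, μ (J k) ≠ ∞) {F : X → X → ℝ≥0∞} (hF : Measurable (Function.uncurry F))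
    {B : ℝ≥0∞} (hB : ∀ k, ∫⁻ x in J k, ∫⁻ y in J (k + 1), F x y ∂μ ∂μ ≤ B) :
    ∃ p : ℕ → X, ∀ k, p k ∈ J k ∧ F (p k) (p (k + 1)) * (μ (J k) * μ (J (k + 1))) ≤ 4 * B := by
  have hslice (k : ℕ) : Measurable fun x => ∫⁻ y in J k, F x y ∂μ := hF.lintegral_prod_right'
  let good (k : ℕ) (x : X) : Prop :=
    x ∈ J k ∧ (∫⁻ y in J (k + 1), F x y ∂μ) * μ (J k) ≤ 2 * B
  obtain ⟨x₀, hx₀⟩ : ∃ x, good 0 x := by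
    obtain ⟨x, hx, h, -⟩ := exists_mem_mul_measure_le_two_mul_setLIntegral (hJ0 0) (hJ 0)
      (hslice 1).aemeasurable (hslice 1).aemeasurable
    exact ⟨x, hx, h.trans (by gcongr; exact hB 0)⟩
  have step (k : ℕ) (x : X) :
      ∃ t, good (k + 1) t ∧ F x t * μ (J (k + 1)) ≤ 2 * ∫⁻ y in J (k + 1), F x y ∂μ := by
    obtain ⟨t, ht, hxt, htgood⟩ := exists_mem_mul_measure_le_two_mul_setLIntegral (hJ0 (k + 1))
      (hJ (k + 1)) hF.of_uncurry_left.aemeasurable (hslice (k + 2)).aemeasurable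
    exact ⟨t, ⟨ht, htgood.trans (by gcongr; exact hB (k + 1))⟩, hxt⟩
  choose next hnext using step
  let p (k : ℕ) : X := Nat.rec x₀ next k
  have hp : ∀ k, good k (p k)
    | 0 => hx₀
    | k + 1 => (hnext k (p k)).1
  refine ⟨p, fun k => ⟨(hp k).1, ?_⟩⟩
  calc F (p k) (p (k + 1)) * (μ (J k) * μ (J (k + 1)))
      = F (p k) (next k (p k)) * μ (J (k + 1)) * μ (J k) := by ring
    _ ≤ 2 * (∫⁻ y in J (k + 1), F (p k) y ∂μ) * μ (J k) := by
      gcongr ?_ * _; exact (hnext k (p k)).2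
    _ = 2 * ((∫⁻ y in J (k + 1), F (p k) y ∂μ) * μ (J k)) := by ring
    _ ≤ 2 * (2 * B) := by gcongr 2 * ?_; exact (hp k).2
    _ = 4 * B := by ring

end Selection

noncomputable def grrKernel (γ α : ℝ) (φ : ℝ → ℝ) (x y : ℝ) : ℝ :=
  if α < |x - y| then |φ x - φ y| ^ 4 / |x - y| ^ γ else 0

section Kernel

variable {γ α : ℝ} {φ : ℝ → ℝ}

theorem grrKernel_nonneg (x y : ℝ) : 0 ≤ grrKernel γ α φ x y := by
  unfold grrKernel; split_ifs <;> positivity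

theorem measurable_grrKernel (hφ : Measurable φ) :
    Measurable (Function.uncurry (grrKernel γ α φ)) := by
  have hd : Measurable fun p : ℝ × ℝ => |p.1 - p.2| := (measurable_fst.sub measurable_snd).abs
  refine Measurable.ite (measurableSet_lt measurable_const hd) ?_ measurable_const
  exact (((hφ.comp measurable_fst).sub (hφ.comp measurable_snd)).abs.pow_const 4).div
    (hd.pow_const γ)

theorem grrB_eq_setIntegral_grrKernel (T : ℝ) :
    grrB T γ α φ = ∫ p in Icc 0 T ×ˢ Icc 0 T, grrKernel γ α φ p.1 p.2 :=
  rfl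

theorem grrB_nonneg (T : ℝ) : 0 ≤ grrB T γ α φ :=
  setIntegral_nonneg (measurableSet_Icc.prod measurableSet_Icc) fun p _ => grrKernel_nonneg p.1 p.2

theorem lintegral_grrKernel_le {T : ℝ} (hφ : Measurable φ)
    (hB : IntegrableOn (fun p : ℝ × ℝ => grrKernel γ α φ p.1 p.2) (Icc 0 T ×ˢ Icc 0 T))
    {s t : Set ℝ} (hs : s ⊆ Icc 0 T) (ht : t ⊆ Icc 0 T) :
    ∫⁻ x in s, ∫⁻ y in t, ENNReal.ofReal (grrKernel γ α φ x y) ≤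
      ENNReal.ofReal (grrB T γ α φ) := by
  rw [← setLIntegral_prod (μ := volume) (ν := volume)
      (fun p => ENNReal.ofReal (grrKernel γ α φ p.1 p.2))
      (measurable_grrKernel hφ).ennreal_ofReal.aemeasurable,
    ← Measure.volume_eq_prod, grrB_eq_setIntegral_grrKernel,
    ofReal_integral_eq_lintegral_ofReal hB (ae_of_all _ fun p => grrKernel_nonneg p.1 p.2)]
  exact lintegral_mono_set (prod_mono hs ht)

theorem abs_sub_le_of_grrKernel_mul_le {u v D m₁ m₂ c B : ℝ} (hγ : 0 ≤ γ) (hα : 0 ≤ α)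
    (huv : α < |u - v|) (hD : |u - v| ≤ D) (hm₁ : 0 < m₁) (hm₂ : 0 < m₂) (hc : 0 ≤ c)
    (hB : 0 ≤ B) (hcD : 4 * D ^ γ ≤ c ^ 4 * (m₁ * m₂))
    (hK : ENNReal.ofReal (grrKernel γ α φ u v) * (ENNReal.ofReal m₁ * ENNReal.ofReal m₂) ≤
      4 * ENNReal.ofReal B) :
    |φ u - φ v| ≤ c * B ^ (1 / 4 : ℝ) := by
  rw [← ENNReal.ofReal_mul hm₁.le, ← ENNReal.ofReal_mul (grrKernel_nonneg u v),
    ← ENNReal.ofReal_ofNat 4, ← ENNReal.ofReal_mul (by norm_num),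
    ENNReal.ofReal_le_ofReal_iff (by positivity), grrKernel, if_pos huv, div_mul_eq_mul_div,
    div_le_iff₀ (Real.rpow_pos_of_pos (hα.trans_lt huv) γ)] at hK
  have h4 : |φ u - φ v| ^ 4 ≤ (c * B ^ (1 / 4 : ℝ)) ^ 4 := by
    rw [mul_pow, ← Real.rpow_natCast (B ^ _), ← Real.rpow_mul hB,
      show (1 / 4 : ℝ) * (4 : ℕ) = 1 by norm_num, Real.rpow_one]
    refine le_of_mul_le_mul_right ?_ (mul_pos hm₁ hm₂)
    calc |φ u - φ v| ^ 4 * (m₁ * m₂) ≤ 4 * B * |u - v| ^ γ := hK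
      _ ≤ 4 * B * D ^ γ := by gcongr
      _ = B * (4 * D ^ γ) := by ring
      _ ≤ B * (c ^ 4 * (m₁ * m₂)) := by gcongr
      _ = c ^ 4 * B * (m₁ * m₂) := by ring
  exact (pow_le_pow_iff_left₀ (abs_nonneg _) (by positivity) four_ne_zero).1 h4

theorem abs_sub_le_of_scale_link {u v B : ℝ} (n : ℕ) (hγ : 0 ≤ γ) (hα : 0 ≤ α)
    (hαn : 2 * α ≤ (1 / 16 : ℝ) ^ n) (hB : 0 ≤ B) (huv : (1 / 16 : ℝ) ^ n / 2 < |u - v|)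
    (huv' : |u - v| ≤ (1 / 16) ^ n)
    (hK : ENNReal.ofReal (grrKernel γ α φ u v) * (ENNReal.ofReal (3 / 8 * (1 / 16) ^ (n + 1)) *
      ENNReal.ofReal (3 / 8 * (1 / 16) ^ n)) ≤ 4 * ENNReal.ofReal B) :
    |φ u - φ v| ≤ 5 * ((1 / 16 : ℝ) ^ ((γ - 2) / 4)) ^ n * B ^ (1 / 4 : ℝ) := by
  rw [Real.rpow_pow_comm (by norm_num)]
  rw [pow_succ] at hK
  set t : ℝ := (1 / 16) ^ n
  have ht : 0 < t := by positivity
  refine abs_sub_le_of_grrKernel_mul_le hγ hα (by linarith) huv' (by positivity) (by positivity)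
    (by positivity) hB ?_ hK
  have hγt : (t ^ ((γ - 2) / 4)) ^ 4 * t ^ 2 = t ^ γ := by
    rw [← Real.rpow_natCast, ← Real.rpow_mul ht.le, ← Real.rpow_natCast t 2,
      ← Real.rpow_add ht]
    norm_num
  calc 4 * t ^ γ ≤ 5 ^ 4 * (9 / 1024) * t ^ γ := by nlinarith [Real.rpow_pos_of_pos ht γ]
    _ = (5 * t ^ ((γ - 2) / 4)) ^ 4 * (3 / 8 * (t * (1 / 16)) * (3 / 8 * t)) := by
      rw [← hγt]; ring

end Kernel

theorem one_add_two_mul_le_sixteen_rpow {x : ℝ} (hx : 0 ≤ x) : 1 + 2 * x ≤ (16 : ℝ) ^ x := by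
  have hlog : 2 ≤ Real.log 16 := by
    rw [show (16 : ℝ) = 2 ^ 4 by norm_num, Real.log_pow]
    push_cast
    linarith [Real.log_two_gt_d9]
  rw [Real.rpow_def_of_pos (by norm_num)]
  nlinarith [Real.add_one_le_exp (Real.log 16 * x)]

theorem geom_sum_Ico_sixteen_rpow_le {γ : ℝ} (hγ : 2 < γ) (M : ℕ) :
    ∑ n ∈ Finset.Ico 1 M, ((1 / 16 : ℝ) ^ ((γ - 2) / 4)) ^ n ≤ 2 / (γ - 2) := by
  set Q : ℝ := (1 / 16) ^ ((γ - 2) / 4)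
  have hQ0 : 0 < Q := by positivity
  have hQ1 : Q < 1 := Real.rpow_lt_one (by norm_num) (by norm_num) (by linarith)
  have hQ : Q * (1 + 2 * ((γ - 2) / 4)) ≤ 1 := by
    calc Q * (1 + 2 * ((γ - 2) / 4)) ≤ Q * (16 : ℝ) ^ ((γ - 2) / 4) := by
          gcongr; exact one_add_two_mul_le_sixteen_rpow (by linarith)
      _ = 1 := by rw [← Real.mul_rpow (by norm_num) (by norm_num)]; norm_num
  calc ∑ n ∈ Finset.Ico 1 M, Q ^ n ≤ Q ^ 1 / (1 - Q) := geom_sum_Ico_le_of_lt_one hQ0.le hQ1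
    _ ≤ 2 / (γ - 2) := by
      rw [pow_one, div_le_div_iff₀ (by linarith) (by linarith)]
      nlinarith

def scaleBlock (n : ℕ) : Set ℝ := Icc (5 / 8 * (1 / 16 : ℝ) ^ n) ((1 / 16) ^ n)

/-- For `k = 0, …, 2M+1` this runs through `I (M+1), …, I 1, 1 - I 1, …, 1 - I (M+1)`,
where `I = scaleBlock`. -/
def scaleChain (M k : ℕ) : Set ℝ :=
  if k ≤ M then scaleBlock (M + 1 - k) else (fun x => 1 - x) ⁻¹' scaleBlock (k - M)

section Scales

theorem scaleBlock_subset_Icc (n : ℕ) : scaleBlock n ⊆ Icc 0 ((1 / 16) ^ n) :=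
  Icc_subset_Icc_left (by positivity)

theorem volume_scaleBlock (n : ℕ) :
    volume (scaleBlock n) = ENNReal.ofReal (3 / 8 * (1 / 16) ^ n) := by
  rw [scaleBlock, Real.volume_Icc]; ring_nf

theorem volume_preimage_scaleBlock (n : ℕ) :
    volume ((fun x => 1 - x) ⁻¹' scaleBlock n) = ENNReal.ofReal (3 / 8 * (1 / 16) ^ n) := by
  rw [scaleBlock, preimage_const_sub_Icc, Real.volume_Icc]; ring_nf

theorem abs_sub_mem_of_mem_scaleBlock {a b : ℝ} {n : ℕ} (ha : a ∈ scaleBlock (n + 1))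
    (hb : b ∈ scaleBlock n) : (1 / 16 : ℝ) ^ n / 2 < |a - b| ∧ |a - b| ≤ (1 / 16) ^ n := by
  obtain ⟨ha₁, ha₂⟩ := ha
  obtain ⟨hb₁, hb₂⟩ := hb
  rw [pow_succ] at ha₁ ha₂
  have : 0 < (1 / 16 : ℝ) ^ n := by positivity
  rw [abs_sub_comm, abs_of_pos (by linarith)]
  constructor <;> linarith

theorem abs_sub_mem_of_mem_scaleBlock_one {a b : ℝ} (ha : a ∈ scaleBlock 1)
    (hb : 1 - b ∈ scaleBlock 1) : 1 / 2 < |a - b| ∧ |a - b| ≤ 1 := by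
  obtain ⟨ha₁, ha₂⟩ := ha
  obtain ⟨hb₁, hb₂⟩ := hb
  norm_num at ha₁ ha₂ hb₁ hb₂
  rw [abs_sub_comm, abs_of_pos (by linarith)]
  constructor <;> linarith

theorem scaleChain_of_le {M k : ℕ} (h : k ≤ M) : scaleChain M k = scaleBlock (M + 1 - k) :=
  if_pos h

theorem scaleChain_of_lt {M k : ℕ} (h : M < k) :
    scaleChain M k = (fun x => 1 - x) ⁻¹' scaleBlock (k - M) :=
  if_neg h.not_ge

theorem scaleChain_subset (M k : ℕ) : scaleChain M k ⊆ Icc 0 1 := by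
  have h (n : ℕ) : scaleBlock n ⊆ Icc 0 1 :=
    (scaleBlock_subset_Icc n).trans (Icc_subset_Icc_right (pow_le_one₀ (by norm_num) (by norm_num)))
  unfold scaleChain
  split_ifs
  · exact h _
  · intro x hx
    obtain ⟨h₀, h₁⟩ := h _ hx
    constructor <;> linarith

theorem volume_scaleChain_ne_zero (M k : ℕ) : volume (scaleChain M k) ≠ 0 := by
  unfold scaleChain
  split_ifs <;> simp [volume_scaleBlock, volume_preimage_scaleBlock]

theorem volume_scaleChain_ne_top (M k : ℕ) : volume (scaleChain M k) ≠ ∞ := by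
  unfold scaleChain
  split_ifs <;> simp [volume_scaleBlock, volume_preimage_scaleBlock]

end Scales

def IsScaleChain (γ α B : ℝ) (φ : ℝ → ℝ) (M : ℕ) (p : ℕ → ℝ) : Prop :=
  ∀ k, p k ∈ scaleChain M k ∧ ENNReal.ofReal (grrKernel γ α φ (p k) (p (k + 1))) *
    (volume (scaleChain M k) * volume (scaleChain M (k + 1))) ≤ 4 * ENNReal.ofReal B

namespace IsScaleChain

variable {γ α B : ℝ} {φ : ℝ → ℝ} {M : ℕ} {p : ℕ → ℝ}

theorem dist_left_le (hp : IsScaleChain γ α B φ M p) (hγ : 0 ≤ γ) (hα : 0 ≤ α)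
    (hαM : 2 * α ≤ (1 / 16 : ℝ) ^ M) (hB : 0 ≤ B) :
    dist (φ (p M)) (φ (p 0)) ≤
      ∑ n ∈ Finset.Ico 1 (M + 1), 5 * ((1 / 16 : ℝ) ^ ((γ - 2) / 4)) ^ n * B ^ (1 / 4 : ℝ) := by
  have := dist_le_Ico_sum_of_dist_le (f := fun n => φ (p (M + 1 - n))) (m := 1) (n := M + 1)
    (d := fun n => 5 * ((1 / 16 : ℝ) ^ ((γ - 2) / 4)) ^ n * B ^ (1 / 4 : ℝ))
    (by omega) fun {n} _ hnM => by
      obtain ⟨hk, hK⟩ := hp (M - n)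
      have hk₁ := (hp (M - n + 1)).1
      rw [scaleChain_of_le (by omega), show M + 1 - (M - n) = n + 1 by omega] at hk hK
      rw [scaleChain_of_le (by omega), show M + 1 - (M - n + 1) = n by omega] at hk₁ hK
      rw [volume_scaleBlock, volume_scaleBlock] at hK
      obtain ⟨hd, hd'⟩ := abs_sub_mem_of_mem_scaleBlock hk hk₁
      rw [show M + 1 - n = M - n + 1 by omega, show M + 1 - (n + 1) = M - n by omega,
        Real.dist_eq, abs_sub_comm]
      exact abs_sub_le_of_scale_link n hγ hα
        (hαM.trans (pow_le_pow_of_le_one (by norm_num) (by norm_num) (by omega))) hB hd hd' hK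
  simpa using this

theorem dist_right_le (hp : IsScaleChain γ α B φ M p) (hγ : 0 ≤ γ) (hα : 0 ≤ α)
    (hαM : 2 * α ≤ (1 / 16 : ℝ) ^ M) (hB : 0 ≤ B) :
    dist (φ (p (M + 1))) (φ (p (2 * M + 1))) ≤
      ∑ n ∈ Finset.Ico 1 (M + 1), 5 * ((1 / 16 : ℝ) ^ ((γ - 2) / 4)) ^ n * B ^ (1 / 4 : ℝ) := by
  have := dist_le_Ico_sum_of_dist_le (f := fun n => φ (p (M + n))) (m := 1) (n := M + 1)
    (d := fun n => 5 * ((1 / 16 : ℝ) ^ ((γ - 2) / 4)) ^ n * B ^ (1 / 4 : ℝ))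
    (by omega) fun {n} _ hnM => by
      obtain ⟨hk, hK⟩ := hp (M + n)
      have hk₁ := (hp (M + n + 1)).1
      rw [scaleChain_of_lt (by omega), show M + n - M = n by omega] at hk hK
      rw [scaleChain_of_lt (by omega), show M + n + 1 - M = n + 1 by omega] at hk₁ hK
      rw [volume_preimage_scaleBlock, volume_preimage_scaleBlock,
        mul_comm (ENNReal.ofReal (3 / 8 * _ ^ n))] at hK
      obtain ⟨hd, hd'⟩ := abs_sub_mem_of_mem_scaleBlock hk₁ hk
      rw [sub_sub_sub_cancel_left] at hd hd'
      rw [Real.dist_eq, ← add_assoc]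
      exact abs_sub_le_of_scale_link n hγ hα
        (hαM.trans (pow_le_pow_of_le_one (by norm_num) (by norm_num) (by omega))) hB hd hd' hK
  simpa [two_mul, add_assoc] using this

theorem dist_middle_le (hp : IsScaleChain γ α B φ M p) (hγ : 0 ≤ γ) (hα : 0 ≤ α)
    (hαM : 2 * α ≤ (1 / 16 : ℝ) ^ M) (hB : 0 ≤ B) :
    dist (φ (p M)) (φ (p (M + 1))) ≤ 10 * B ^ (1 / 4 : ℝ) := by
  obtain ⟨hk, hK⟩ := hp M
  have hk₁ := (hp (M + 1)).1
  rw [scaleChain_of_le le_rfl, Nat.add_sub_cancel_left] at hk hK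
  rw [scaleChain_of_lt (by omega), Nat.add_sub_cancel_left] at hk₁ hK
  rw [volume_scaleBlock, volume_preimage_scaleBlock] at hK
  obtain ⟨hd, hd'⟩ := abs_sub_mem_of_mem_scaleBlock_one hk hk₁
  have h1 : 2 * α ≤ 1 := hαM.trans (pow_le_one₀ (by norm_num) (by norm_num))
  refine abs_sub_le_of_grrKernel_mul_le hγ hα (by linarith) hd' (by positivity)
    (by positivity) (by norm_num) hB ?_ hK
  norm_num

theorem abs_sub_le (hp : IsScaleChain γ α B φ M p) (hγ : 2 < γ) (hα : 0 ≤ α)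
    (hαM : 2 * α ≤ (1 / 16 : ℝ) ^ M) (hB : 0 ≤ B) :
    |φ (p (2 * M + 1)) - φ (p 0)| ≤ 10 * (γ / (γ - 2)) * B ^ (1 / 4 : ℝ) := by
  have hsum : ∑ n ∈ Finset.Ico 1 (M + 1), 5 * ((1 / 16 : ℝ) ^ ((γ - 2) / 4)) ^ n *
      B ^ (1 / 4 : ℝ) ≤ 5 * (2 / (γ - 2)) * B ^ (1 / 4 : ℝ) := by
    rw [← Finset.sum_mul, ← Finset.mul_sum]
    gcongr
    exact geom_sum_Ico_sixteen_rpow_le hγ (M + 1)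
  have hγ0 : 0 ≤ γ := by linarith
  calc |φ (p (2 * M + 1)) - φ (p 0)| = dist (φ (p 0)) (φ (p (2 * M + 1))) := by
        rw [dist_comm, Real.dist_eq]
    _ ≤ dist (φ (p 0)) (φ (p M)) + dist (φ (p M)) (φ (p (M + 1))) +
        dist (φ (p (M + 1))) (φ (p (2 * M + 1))) := dist_triangle4 _ _ _ _
    _ ≤ 5 * (2 / (γ - 2)) * B ^ (1 / 4 : ℝ) + 10 * B ^ (1 / 4 : ℝ) +
        5 * (2 / (γ - 2)) * B ^ (1 / 4 : ℝ) := by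
      linarith [(hp.dist_left_le hγ0 hα hαM hB).trans hsum, hp.dist_middle_le hγ0 hα hαM hB,
        (hp.dist_right_le hγ0 hα hαM hB).trans hsum, dist_comm (φ (p 0)) (φ (p M))]
    _ = 10 * (γ / (γ - 2)) * B ^ (1 / 4 : ℝ) := by
      field_simp [show γ - 2 ≠ 0 by linarith]; ring

end IsScaleChain

theorem modified_GRR_endpoints_general (γ α : ℝ) (hγ : 2 < γ) (hα : 0 < α)
    (φ : ℝ → ℝ) (hφ : Measurable φ)
    (hB : IntegrableOn
      (fun p : ℝ × ℝ => if α < |p.1 - p.2| then |φ p.1 - φ p.2| ^ 4 / |p.1 - p.2| ^ γ else 0)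
      (Set.Icc (0 : ℝ) 1 ×ˢ Set.Icc (0 : ℝ) 1)) :
    ∃ w ∈ Set.Icc (0 : ℝ) (2 * α), ∃ w' ∈ Set.Icc (0 : ℝ) (2 * α),
      |φ (1 - w') - φ w| ≤
        8 * Real.sqrt 2 * (γ / (γ - 2)) * grrB 1 γ α φ ^ ((1 : ℝ) / 4) := by
  have hγ2 : 0 < γ - 2 := by linarith
  have hB4 : 0 ≤ grrB 1 γ α φ ^ ((1 : ℝ) / 4) := Real.rpow_nonneg (grrB_nonneg 1) _
  rcases le_or_gt 1 (2 * α) with hα1 | hα1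
  · exact ⟨1 / 2, ⟨by norm_num, by linarith⟩, 1 / 2, ⟨by norm_num, by linarith⟩,
      by rw [show (1 : ℝ) - 1 / 2 = 1 / 2 by norm_num, sub_self, abs_zero]; positivity⟩
  obtain ⟨M, hM, hαM⟩ := exists_nat_pow_near_of_lt_one (by linarith) hα1.le
    (by norm_num : (0 : ℝ) < 1 / 16) (by norm_num)
  obtain ⟨p, hp⟩ := exists_seq_mem_mul_measure_le
    (F := fun x y => ENNReal.ofReal (grrKernel γ α φ x y)) (volume_scaleChain_ne_zero M)
    (volume_scaleChain_ne_top M) (measurable_grrKernel hφ).ennreal_ofReal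
    fun k => lintegral_grrKernel_le hφ hB (scaleChain_subset M k) (scaleChain_subset M (k + 1))
  have hI : scaleBlock (M + 1) ⊆ Icc 0 (2 * α) :=
    (scaleBlock_subset_Icc _).trans (Icc_subset_Icc_right hM.le)
  have h0 : p 0 ∈ scaleBlock (M + 1) := by simpa [scaleChain_of_le] using (hp 0).1
  have h1 : 1 - p (2 * M + 1) ∈ scaleBlock (M + 1) := by
    have := (hp (2 * M + 1)).1
    rwa [scaleChain_of_lt (by omega), show 2 * M + 1 - M = M + 1 by omega] at this
  refine ⟨p 0, hI h0, 1 - p (2 * M + 1), hI h1, ?_⟩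
  rw [sub_sub_cancel]
  calc |φ (p (2 * M + 1)) - φ (p 0)| ≤ 10 * (γ / (γ - 2)) * grrB 1 γ α φ ^ ((1 : ℝ) / 4) :=
        IsScaleChain.abs_sub_le hp hγ hα.le hαM (grrB_nonneg 1)
    _ ≤ 8 * Real.sqrt 2 * (γ / (γ - 2)) * grrB 1 γ α φ ^ ((1 : ℝ) / 4) := by
      gcongr
      nlinarith [Real.sq_sqrt (show (0 : ℝ) ≤ 2 by norm_num), Real.sqrt_nonneg 2]

theorem modified_GRR_endpoints (γ α : ℝ) (hγ : 2 < γ) (hγ' : γ < 3) (hα : 0 < α)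
    (φ : ℝ → ℝ) (hφ : Measurable φ)
    (hB : IntegrableOn
      (fun p : ℝ × ℝ => if α < |p.1 - p.2| then |φ p.1 - φ p.2| ^ 4 / |p.1 - p.2| ^ γ else 0)
      (Set.Icc (0 : ℝ) 1 ×ˢ Set.Icc (0 : ℝ) 1)) :
    ∃ w ∈ Set.Icc (0 : ℝ) (2 * α), ∃ w' ∈ Set.Icc (0 : ℝ) (2 * α),
      |φ (1 - w') - φ w| ≤
        8 * Real.sqrt 2 * (γ / (γ - 2)) * grrB 1 γ α φ ^ ((1 : ℝ) / 4) :=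
  modified_GRR_endpoints_general γ α hγ hα φ hφ hB
end

section
/- There exists a constant C > 0 such that for every n ≥ 2, ∑_T ∏_{i=1}^n deg_T(i)^{deg_T(i)} ≤ C^n · (n−2)!, where the sum ranges over all trees T on the vertex set {1,…,n}. -/
/-!
Root every tree on `V` at a vertex `r` and send each vertex to its neighbour on the path to `r`
(and `r` to itself). This parent map determines the tree, and `deg v ≤ c_v + 1`, where `c_v` is
the number of children of `v`. So the sum over trees is at most the sum, over all maps
`f : V → V` with fiber sizes `c_v`, of `∏ (c_v + 1)^(c_v + 1) ≤ ∏ 6^(c_v + 1) c_v!`.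
Inserting the points of `V` one at a time shows `∑_f ∏ c_v! = n (n + 1) ⋯ (2n - 1) ≤ (2n)^n`,
and `n^n ≤ 3^n n! ≤ 12^n (n - 2)!` finishes the bound with `C = 864`.
-/

open Finset Nat

open scoped Classical

section Fibers

variable {α β : Type*} [Fintype α] [DecidableEq β]

def fiberCard (f : α → β) (b : β) : ℕ :=
  #{a | f a = b}

lemma sum_fiberCard [Fintype β] (f : α → β) : ∑ b, fiberCard f b = Fintype.card α :=
  (card_eq_sum_card_fiberwise fun a _ => mem_univ (f a)).symm

end Fibers

lemma fiberCard_cons {N k : ℕ} (a : Fin k) (g : Fin N → Fin k) (i : Fin k) :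
    fiberCard (Fin.cons a g : Fin (N + 1) → Fin k) i =
      fiberCard g i + if a = i then 1 else 0 := by
  simp only [fiberCard, card_filter, Fin.sum_univ_succ, Fin.cons_zero, Fin.cons_succ]
  ring

lemma prod_factorial_fiberCard_cons {N k : ℕ} (a : Fin k) (g : Fin N → Fin k) :
    ∏ i, (fiberCard (Fin.cons a g : Fin (N + 1) → Fin k) i)! =
      (fiberCard g a + 1) * ∏ i, (fiberCard g i)! := by
  have h : ∀ i, (fiberCard (Fin.cons a g : Fin (N + 1) → Fin k) i)! =
      (if a = i then fiberCard g i + 1 else 1) * (fiberCard g i)! := by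
    intro i
    rw [fiberCard_cons]
    split_ifs <;> simp [Nat.factorial_succ]
  rw [prod_congr rfl fun i _ => h i, prod_mul_distrib, prod_ite_eq]
  simp

theorem sum_prod_factorial_fiberCard (N k : ℕ) :
    ∑ f : Fin N → Fin k, ∏ i, (fiberCard f i)! = k.ascFactorial N := by
  induction N with
  | zero => simp [fiberCard]
  | succ N ih =>
    rw [← (Fin.consEquiv fun _ => Fin k).sum_comp, Fintype.sum_prod_type_right]
    have hcons (g : Fin N → Fin k) :
        ∑ a, ∏ i, (fiberCard (Fin.cons a g : Fin (N + 1) → Fin k) i)! =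
          (k + N) * ∏ i, (fiberCard g i)! := by
      simp only [prod_factorial_fiberCard_cons, ← sum_mul, sum_add_distrib, sum_fiberCard,
        Fintype.card_fin, sum_const, Finset.card_univ, smul_eq_mul, mul_one, add_comm N k]
    calc _ = ∑ g : Fin N → Fin k, (k + N) * ∏ i, (fiberCard g i)! :=
          sum_congr rfl fun g _ => hcons g
      _ = k.ascFactorial (N + 1) := by rw [← mul_sum, ih, Nat.ascFactorial_succ]

namespace SimpleGraph

variable {V : Type*} {T : SimpleGraph V}

noncomputable def parent (T : SimpleGraph V) (r v : V) : V :=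
  if h : ∃ p : T.Walk v r, p.IsPath then h.choose.snd else v

namespace IsTree

lemma parent_eq_snd (hT : T.IsTree) {r v : V} {p : T.Walk v r} (hp : p.IsPath) :
    T.parent r v = p.snd := by
  have h : ∃ p : T.Walk v r, p.IsPath := ⟨p, hp⟩
  rw [parent, dif_pos h, (hT.existsUnique_path v r).unique h.choose_spec hp]

lemma parent_root (hT : T.IsTree) (r : V) : T.parent r r = r :=
  hT.parent_eq_snd Walk.IsPath.nil

lemma adj_parent (hT : T.IsTree) {r v : V} (hv : v ≠ r) : T.Adj v (T.parent r v) := by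
  obtain ⟨p, hp, -⟩ := hT.existsUnique_path v r
  rw [hT.parent_eq_snd hp]
  exact Walk.adj_snd (Walk.not_nil_of_ne hv)

lemma parent_eq_or_parent_eq_of_adj (hT : T.IsTree) (r : V) {a b : V} (hab : T.Adj a b) :
    T.parent r a = b ∨ T.parent r b = a := by
  obtain ⟨p, hp, -⟩ := hT.existsUnique_path a r
  by_cases hb : b ∈ p.support
  · exact .inl ((hT.parent_eq_snd hp).trans (hT.isAcyclic.eq_snd_of_adj_start hp hab hb).symm)
  · exact .inr ((hT.parent_eq_snd (hp.cons hb)).trans (Walk.snd_cons p hab.symm))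

lemma adj_iff_parent (hT : T.IsTree) (r a b : V) :
    T.Adj a b ↔ (a ≠ r ∧ T.parent r a = b) ∨ (b ≠ r ∧ T.parent r b = a) := by
  refine ⟨fun hab => ?_, ?_⟩
  · rcases hT.parent_eq_or_parent_eq_of_adj r hab with h | h
    · refine .inl ⟨?_, h⟩
      rintro rfl
      exact hab.ne ((hT.parent_root a).symm.trans h)
    · refine .inr ⟨?_, h⟩
      rintro rfl
      exact hab.ne' ((hT.parent_root b).symm.trans h)
  · rintro (⟨ha, rfl⟩ | ⟨hb, rfl⟩)
    · exact hT.adj_parent ha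
    · exact (hT.adj_parent hb).symm

lemma neighborSet_subset_insert_parent (hT : T.IsTree) (r v : V) :
    T.neighborSet v ⊆ insert (T.parent r v) {w | T.parent r w = v} := by
  intro w hw
  rcases (hT.adj_iff_parent r v w).mp hw with ⟨-, h⟩ | ⟨-, h⟩
  · exact .inl h.symm
  · exact .inr h

lemma ncard_neighborSet_le [Fintype V] [DecidableEq V] (hT : T.IsTree) (r v : V) :
    (T.neighborSet v).ncard ≤ fiberCard (T.parent r) v + 1 := by
  calc (T.neighborSet v).ncard ≤ (insert (T.parent r v) {w | T.parent r w = v}).ncard :=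
        Set.ncard_le_ncard (hT.neighborSet_subset_insert_parent r v) (Set.toFinite _)
    _ ≤ {w | T.parent r w = v}.ncard + 1 := Set.ncard_insert_le _ _
    _ = fiberCard (T.parent r) v + 1 := by
        simp [fiberCard, ← Set.ncard_coe_finset]

end IsTree

lemma injOn_parent (r : V) : Set.InjOn (fun T : SimpleGraph V => T.parent r) {T | T.IsTree} := by
  intro T hT T' hT' h
  ext a b
  rw [hT.adj_iff_parent r, hT'.adj_iff_parent r, show T.parent r = T'.parent r from h]

end SimpleGraph

theorem sum_prod_pow_ncard_neighborSet_le {V : Type*} [Fintype V] [DecidableEq V] (r : V) :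
    ∑ T ∈ univ.filter (fun T : SimpleGraph V => T.IsTree),
        ∏ v, (T.neighborSet v).ncard ^ (T.neighborSet v).ncard ≤
      ∑ f : V → V, ∏ v, (fiberCard f v + 1) ^ (fiberCard f v + 1) := by
  set g : (V → V) → ℕ := fun f => ∏ v, (fiberCard f v + 1) ^ (fiberCard f v + 1)
  set trees := univ.filter (fun T : SimpleGraph V => T.IsTree)
  calc _ ≤ ∑ T ∈ trees, g (T.parent r) :=
        sum_le_sum fun T hT => prod_le_prod' fun v _ =>
          Nat.pow_self_mono ((mem_filter.mp hT).2.ncard_neighborSet_le r v)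
    _ = ∑ f ∈ trees.image (SimpleGraph.parent · r), g f :=
        (sum_image fun _ hT _ hT' h => SimpleGraph.injOn_parent r (mem_filter.mp hT).2
          (mem_filter.mp hT').2 h).symm
    _ ≤ ∑ f, g f := sum_le_sum_of_subset (subset_univ _)

lemma pow_self_le_three_pow_mul_factorial (m : ℕ) : m ^ m ≤ 3 ^ m * m ! := by
  have hexp : Real.exp m ≤ 3 ^ m := by
    rw [← Real.exp_one_pow]
    exact pow_le_pow_left₀ (Real.exp_pos 1).le Real.exp_one_lt_three.le m
  have h : (m : ℝ) ^ m ≤ 3 ^ m * m ! := by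
    rw [← div_le_iff₀ (by positivity)]
    exact (Real.pow_div_factorial_le_exp _ m.cast_nonneg m).trans hexp
  exact_mod_cast h

lemma succ_pow_succ_le_six_pow_mul_factorial (c : ℕ) : (c + 1) ^ (c + 1) ≤ 6 ^ (c + 1) * c ! :=
  calc (c + 1) ^ (c + 1) ≤ 3 ^ (c + 1) * ((c + 1) * c !) :=
        pow_self_le_three_pow_mul_factorial (c + 1)
    _ ≤ 3 ^ (c + 1) * (2 ^ (c + 1) * c !) := by gcongr; exact Nat.lt_two_pow_self.le
    _ = 6 ^ (c + 1) * c ! := by rw [← mul_assoc, ← mul_pow]; rfl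

lemma sum_prod_succ_pow_succ_fiberCard_le (n : ℕ) :
    ∑ f : Fin n → Fin n, ∏ i, (fiberCard f i + 1) ^ (fiberCard f i + 1) ≤
      36 ^ n * n.ascFactorial n :=
  calc _ ≤ ∑ f : Fin n → Fin n, ∏ i, (6 ^ (fiberCard f i + 1) * (fiberCard f i)!) := by
        gcongr; exact succ_pow_succ_le_six_pow_mul_factorial _
    _ = ∑ f : Fin n → Fin n, 36 ^ n * ∏ i, (fiberCard f i)! := by
        refine sum_congr rfl fun f _ => ?_
        rw [prod_mul_distrib, prod_pow_eq_pow_sum, sum_add_distrib, sum_fiberCard]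
        simp [pow_add, ← mul_pow]
    _ = 36 ^ n * n.ascFactorial n := by rw [← mul_sum, sum_prod_factorial_fiberCard]

lemma ascFactorial_self_le_two_mul_pow (n : ℕ) : n.ascFactorial n ≤ (2 * n) ^ n := by
  cases n with
  | zero => rfl
  | succ m => exact (Nat.ascFactorial_le_pow_add m (m + 1)).trans (by gcongr; omega)

lemma factorial_add_two_le_four_pow_mul_factorial (m : ℕ) : (m + 2)! ≤ 4 ^ (m + 2) * m ! := by
  have h : m + 2 < 2 ^ (m + 2) := Nat.lt_two_pow_self
  rw [Nat.factorial_succ, Nat.factorial_succ, ← mul_assoc]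
  gcongr
  calc (m + 2) * (m + 1) ≤ 2 ^ (m + 2) * 2 ^ (m + 2) := by gcongr; omega
    _ = 4 ^ (m + 2) := by rw [← mul_pow]; rfl

theorem sum_over_trees_degree_bound :
    ∃ C : ℝ, 0 < C ∧ ∀ n : ℕ, 2 ≤ n →
      ∑ T ∈ Finset.univ.filter (fun T : SimpleGraph (Fin n) => T.IsTree),
          ∏ i : Fin n, ((T.neighborSet i).ncard : ℝ) ^ (T.neighborSet i).ncard ≤
        C ^ n * Nat.factorial (n - 2) := by
  refine ⟨864, by norm_num, fun n hn => ?_⟩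
  obtain ⟨m, rfl⟩ := Nat.exists_eq_add_of_le' hn
  have key : ∑ T ∈ univ.filter (fun T : SimpleGraph (Fin (m + 2)) => T.IsTree),
      ∏ i, (T.neighborSet i).ncard ^ (T.neighborSet i).ncard ≤ 864 ^ (m + 2) * m ! :=
    calc _ ≤ 36 ^ (m + 2) * (m + 2).ascFactorial (m + 2) :=
          (sum_prod_pow_ncard_neighborSet_le 0).trans (sum_prod_succ_pow_succ_fiberCard_le _)
      _ ≤ 36 ^ (m + 2) * (2 ^ (m + 2) * (m + 2) ^ (m + 2)) := by
          rw [← mul_pow]; gcongr; exact ascFactorial_self_le_two_mul_pow _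
      _ ≤ 36 ^ (m + 2) * (2 ^ (m + 2) * (3 ^ (m + 2) * (m + 2)!)) := by
          gcongr; exact pow_self_le_three_pow_mul_factorial _
      _ ≤ 36 ^ (m + 2) * (2 ^ (m + 2) * (3 ^ (m + 2) * (4 ^ (m + 2) * m !))) := by
          gcongr; exact factorial_add_two_le_four_pow_mul_factorial m
      _ = 864 ^ (m + 2) * m ! := by simp only [← mul_assoc, ← mul_pow]; norm_num
  simpa using (by exact_mod_cast key : (_ : ℝ) ≤ _)
end

section
/- Let d ≥ 2, C₀ > 0, β₀ > 0. Let f : ℝ×𝕋^d×ℝ^d → ℝ be continuously differentiable with |f(t,x,v)|, |∂_t f(t,x,v)|, |∇_x f(t,x,v)| ≤ C₀ e^{−(β₀/2)|v|²}, and suppose f solves the Boltzmann equation pointwise: ∂_t f(t,x,v₁) + v₁·∇_x f(t,x,v₁) = ∫_{ℝ^d}∫_{𝕊^{d−1}} ((v₁−v₂)·ω)₊ [f(t,x,v₁′) f(t,x,v₂′) − f(t,x,v₁) f(t,x,v₂)] dω dv₂. Let φ : 𝕋^d×ℝ^d → ℝ be continuously differentiable, bounded, with bounded gradient. Then for every (t,x,v₁)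 one has the identity Σ_t φ(x,v₁) = − f(t,x,v₁)·(𝓛*_t φ)(x,v₁) − 𝓛_t( f(t,·) φ )(x,v₁) + ∂_t f(t,x,v₁)·φ(x,v₁) + ∫_{ℝ^d}∫_{𝕊^{d−1}} ((v₁−v₂)·ω)₊ [f(t,x,v₁′) f(t,x,v₂′) − f(t,x,v₁) f(t,x,v₂)] φ(x,v₂) dω dv₂, with the operators Σ_t, 𝓛*_t, 𝓛_t defined in the context. -/
/-!
Statement 17: pointwise identity relating the noise covariance operator `Σ_t`, the linearized
Boltzmann operators `𝓛_t`, `𝓛*_t`, and the collision operator, for a solution `f` of the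
Boltzmann equation on `𝕋^d × ℝ^d`.  Functions on the torus `𝕋^d = ℝ^d/ℤ^d` are modeled as
`ℤ^d`-periodic functions on `ℝ^d`.
-/

open MeasureTheory Metric
open scoped RealInnerProductSpace ENNReal

/-- Velocity/position space `ℝ^d`. -/
abbrev Vel (d : ℕ) := EuclideanSpace ℝ (Fin d)

/-- The surface measure on the unit sphere `𝕊^{d−1} ⊂ ℝ^d`. -/
noncomputable def sphereMeasure (d : ℕ) : Measure (sphere (0 : Vel d) 1) :=
  (volume : Measure (Vel d)).toSphere

/-- The measure `dω dv₂` over which collision integrals are taken. -/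
noncomputable def collMeasure (d : ℕ) : Measure (Vel d × sphere (0 : Vel d) 1) :=
  (volume : Measure (Vel d)).prod (sphereMeasure d)

/-- Scattered velocity `v₁′ = v₁ − ((v₁−v₂)·ω) ω`. -/
noncomputable def vScat₁ {d : ℕ} (v₁ v₂ ω : Vel d) : Vel d := v₁ - ⟪v₁ - v₂, ω⟫ • ω

/-- Scattered velocity `v₂′ = v₂ + ((v₁−v₂)·ω) ω`. -/
noncomputable def vScat₂ {d : ℕ} (v₁ v₂ ω : Vel d) : Vel d := v₂ + ⟪v₁ - v₂, ω⟫ • ω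

/-- The vector of `ℝ^d` with integer coordinates `k`. -/
noncomputable def intVec (d : ℕ) (k : Fin d → ℤ) : Vel d :=
  (WithLp.equiv 2 (∀ _ : Fin d, ℝ)).symm fun i => (k i : ℝ)

/-- A function of `(x,v) ∈ ℝ^d × ℝ^d` is `ℤ^d`-periodic in `x` (i.e. lives on `𝕋^d × ℝ^d`). -/
def IsZdPeriodic {d : ℕ} (g : Vel d → Vel d → ℝ) : Prop :=
  ∀ (k : Fin d → ℤ) (x v : Vel d), g (x + intVec d k) v = g x v

/-- `Δφ(x,v₁,v₂,ω) = φ(x,v₁′) + φ(x,v₂′) − φ(x,v₁) − φ(x,v₂)`. -/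
noncomputable def deltaFn {d : ℕ} (φ : Vel d → Vel d → ℝ) (x v₁ v₂ ω : Vel d) : ℝ :=
  φ x (vScat₁ v₁ v₂ ω) + φ x (vScat₂ v₁ v₂ ω) - φ x v₁ - φ x v₂

/-- The covariance operator
`Σ φ(x,v₁) = −∫∫ ((v₁−v₂)·ω)₊ [g(x,v₁)g(x,v₂) + g(x,v₁′)g(x,v₂′)] Δφ dω dv₂`. -/
noncomputable def sigmaOp {d : ℕ} (g φ : Vel d → Vel d → ℝ) (x v₁ : Vel d) : ℝ :=
  -∫ p, max ⟪v₁ - p.1, (p.2 : Vel d)⟫ 0 *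
      (g x v₁ * g x p.1 +
        g x (vScat₁ v₁ p.1 (p.2 : Vel d)) * g x (vScat₂ v₁ p.1 (p.2 : Vel d))) *
      deltaFn φ x v₁ p.1 (p.2 : Vel d) ∂(collMeasure d)

/-- The adjoint linearized Boltzmann operator
`𝓛* φ(x,v₁) = v₁·∇_x φ(x,v₁) + ∫∫ ((v₁−v₂)·ω)₊ g(x,v₂) Δφ dω dv₂`. -/
noncomputable def lStarOp {d : ℕ} (g φ : Vel d → Vel d → ℝ) (x v₁ : Vel d) : ℝ :=
  fderiv ℝ (fun y => φ y v₁) x v₁ +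
    ∫ p, max ⟪v₁ - p.1, (p.2 : Vel d)⟫ 0 * g x p.1 *
      deltaFn φ x v₁ p.1 (p.2 : Vel d) ∂(collMeasure d)

/-- The linearized Boltzmann operator
`𝓛 h(x,v₁) = −v₁·∇_x h + ∫∫ ((v₁−v₂)·ω)₊ [g₂′h₁′ + g₁′h₂′ − g₁h₂ − g₂h₁] dω dv₂`. -/
noncomputable def lOp {d : ℕ} (g h : Vel d → Vel d → ℝ) (x v₁ : Vel d) : ℝ :=
  -(fderiv ℝ (fun y => h y v₁) x v₁) +
    ∫ p, max ⟪v₁ - p.1, (p.2 : Vel d)⟫ 0 *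
      (g x (vScat₂ v₁ p.1 (p.2 : Vel d)) * h x (vScat₁ v₁ p.1 (p.2 : Vel d)) +
        g x (vScat₁ v₁ p.1 (p.2 : Vel d)) * h x (vScat₂ v₁ p.1 (p.2 : Vel d)) -
        g x v₁ * h x p.1 - g x p.1 * h x v₁) ∂(collMeasure d)

/-- The Boltzmann collision operator
`Q(g)(x,v₁) = ∫∫ ((v₁−v₂)·ω)₊ [g(x,v₁′)g(x,v₂′) − g(x,v₁)g(x,v₂)] dω dv₂`. -/
noncomputable def boltzColl {d : ℕ} (g : Vel d → Vel d → ℝ) (x v₁ : Vel d) : ℝ :=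
  ∫ p, max ⟪v₁ - p.1, (p.2 : Vel d)⟫ 0 *
    (g x (vScat₁ v₁ p.1 (p.2 : Vel d)) * g x (vScat₂ v₁ p.1 (p.2 : Vel d)) -
      g x v₁ * g x p.1) ∂(collMeasure d)

/-- The recollision term `∫∫ ((v₁−v₂)·ω)₊ [g₁′g₂′ − g₁g₂] φ(x,v₂) dω dv₂`. -/
noncomputable def recollTerm {d : ℕ} (g φ : Vel d → Vel d → ℝ) (x v₁ : Vel d) : ℝ :=
  ∫ p, max ⟪v₁ - p.1, (p.2 : Vel d)⟫ 0 *
    (g x (vScat₁ v₁ p.1 (p.2 : Vel d)) * g x (vScat₂ v₁ p.1 (p.2 : Vel d)) -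
      g x v₁ * g x p.1) * φ x p.1 ∂(collMeasure d)


/-!
Split `𝓛*` and `𝓛` into their transport and collision parts. The transport terms cancel by the
product rule for `∇ₓ(fφ)` and the Boltzmann equation for `∂ₜf`; the collision terms combine into
`Σ` by a pointwise algebraic identity between the integrands, which may be added up once each is
known to be integrable. Integrability follows from `((v₁−v₂)·ω)₊ ≤ |v₁| + |v₂|`, the Gaussian
bound on `f`, and, for the gain terms, conservation of energy
`|v₁′|² + |v₂′|² = |v₁|² + |v₂|²`, which turns `f(v₁′) f(v₂′)` into a Gaussian in `v₂`.
-/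

instance (d : ℕ) : IsFiniteMeasure (sphereMeasure d) := by
  unfold sphereMeasure; infer_instance

section Gaussian

variable {V : Type*} [NormedAddCommGroup V] [InnerProductSpace ℝ V] [FiniteDimensional ℝ V]
  [MeasurableSpace V] [BorelSpace V]

theorem integrable_exp_neg_mul_sq_norm {β : ℝ} (hβ : 0 < β) :
    Integrable (fun v : V => Real.exp (-β * ‖v‖ ^ 2)) :=
  Integrable.of_integral_ne_zero <| by
    rw [GaussianFourier.integral_rexp_neg_mul_sq_norm hβ]; positivity

theorem add_mul_exp_neg_mul_sq_le {a s β : ℝ} (ha : 0 ≤ a) (hs : 0 ≤ s) (hβ : 0 < β) :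
    (a + s) * Real.exp (-β * s ^ 2) ≤
      (a + 1) * Real.exp (1 / (2 * β)) * Real.exp (-(β / 2) * s ^ 2) := by
  have hs_exp : s ≤ Real.exp s := by linarith [Real.add_one_le_exp s]
  have h_one : 1 ≤ Real.exp s := Real.one_le_exp hs
  -- `s - β s² ≤ 1 / (2β) - (β / 2) s²` is `(β s - 1)² ≥ 0`
  have h_exponent : s + -β * s ^ 2 ≤ 1 / (2 * β) + -(β / 2) * s ^ 2 := by
    have : 0 ≤ (β * s - 1) ^ 2 / (2 * β) := by positivity
    field_simp at this ⊢
    nlinarith [this]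
  calc (a + s) * Real.exp (-β * s ^ 2)
      ≤ (a + 1) * Real.exp s * Real.exp (-β * s ^ 2) := by gcongr; nlinarith
    _ = (a + 1) * Real.exp (s + -β * s ^ 2) := by rw [Real.exp_add]; ring
    _ ≤ (a + 1) * Real.exp (1 / (2 * β) + -(β / 2) * s ^ 2) := by gcongr
    _ = _ := by rw [Real.exp_add]; ring

theorem integrable_add_norm_mul_exp_neg_mul_sq_norm {a β : ℝ} (ha : 0 ≤ a) (hβ : 0 < β) :
    Integrable (fun v : V => (a + ‖v‖) * Real.exp (-β * ‖v‖ ^ 2)) := by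
  refine ((integrable_exp_neg_mul_sq_norm (half_pos hβ)).const_mul
    ((a + 1) * Real.exp (1 / (2 * β)))).mono' (by fun_prop) (ae_of_all _ fun v => ?_)
  rw [Real.norm_of_nonneg (by positivity)]
  exact add_mul_exp_neg_mul_sq_le ha (norm_nonneg v) hβ

end Gaussian

theorem norm_vScat₁_sq_add_norm_vScat₂_sq {d : ℕ} (v₁ v₂ ω : Vel d) (hω : ‖ω‖ = 1) :
    ‖vScat₁ v₁ v₂ ω‖ ^ 2 + ‖vScat₂ v₁ v₂ ω‖ ^ 2 = ‖v₁‖ ^ 2 + ‖v₂‖ ^ 2 := by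
  have hωω : ⟪ω, ω⟫ = 1 := by rw [real_inner_self_eq_norm_sq, hω, one_pow]
  simp only [vScat₁, vScat₂, ← real_inner_self_eq_norm_sq, inner_sub_left, inner_sub_right,
    inner_add_left, inner_add_right, real_inner_smul_left, real_inner_smul_right, hωω,
    real_inner_comm ω]
  ring

theorem max_inner_sub_le_norm_add {d : ℕ} (v₁ v₂ ω : Vel d) (hω : ‖ω‖ = 1) :
    max ⟪v₁ - v₂, ω⟫ 0 ≤ ‖v₁‖ + ‖v₂‖ := by
  refine max_le ?_ (by positivity)
  calc ⟪v₁ - v₂, ω⟫ ≤ ‖v₁ - v₂‖ * ‖ω‖ := real_inner_le_norm _ _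
    _ = ‖v₁ - v₂‖ := by rw [hω, mul_one]
    _ ≤ ‖v₁‖ + ‖v₂‖ := norm_sub_le _ _

theorem integrable_max_inner_sub_mul {d : ℕ} (v₁ : Vel d) {β C : ℝ} (hβ : 0 < β)
    {H : Vel d × sphere (0 : Vel d) 1 → ℝ} (hH : Continuous H)
    (hHb : ∀ p, |H p| ≤ C * Real.exp (-β * ‖p.1‖ ^ 2)) :
    Integrable (fun p => max ⟪v₁ - p.1, (p.2 : Vel d)⟫ 0 * H p) (collMeasure d) := by
  refine (((integrable_add_norm_mul_exp_neg_mul_sq_norm (norm_nonneg v₁) hβ).const_mul C).comp_fst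
    (sphereMeasure d)).mono' (by fun_prop) (ae_of_all _ fun p => ?_)
  have hK := max_inner_sub_le_norm_add v₁ p.1 p.2 (norm_eq_of_mem_sphere p.2)
  rw [norm_mul, Real.norm_of_nonneg (le_max_right _ _), Real.norm_eq_abs]
  calc max ⟪v₁ - p.1, (p.2 : Vel d)⟫ 0 * |H p|
      ≤ (‖v₁‖ + ‖p.1‖) * (C * Real.exp (-β * ‖p.1‖ ^ 2)) :=
        mul_le_mul hK (hHb p) (abs_nonneg _) (by positivity)
    _ = _ := by ring

section Slice

variable {d : ℕ} {g : Vel d → ℝ} {β C : ℝ}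

theorem abs_mul_le_of_abs_le_exp (hgb : ∀ v, |g v| ≤ C * Real.exp (-β * ‖v‖ ^ 2)) (a b : Vel d) :
    |g a * g b| ≤ C ^ 2 * Real.exp (-β * (‖a‖ ^ 2 + ‖b‖ ^ 2)) := by
  rw [abs_mul, mul_add, Real.exp_add]
  calc |g a| * |g b| ≤ (C * Real.exp (-β * ‖a‖ ^ 2)) * (C * Real.exp (-β * ‖b‖ ^ 2)) :=
        mul_le_mul (hgb a) (hgb b) (abs_nonneg _) ((abs_nonneg _).trans (hgb a))
    _ = _ := by ring

@[fun_prop]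
theorem Continuous.vScat₁ {α : Type*} [TopologicalSpace α] {a b c : α → Vel d}
    (ha : Continuous a) (hb : Continuous b) (hc : Continuous c) :
    Continuous fun z => vScat₁ (a z) (b z) (c z) := by
  unfold _root_.vScat₁; fun_prop

@[fun_prop]
theorem Continuous.vScat₂ {α : Type*} [TopologicalSpace α] {a b c : α → Vel d}
    (ha : Continuous a) (hb : Continuous b) (hc : Continuous c) :
    Continuous fun z => vScat₂ (a z) (b z) (c z) := by
  unfold _root_.vScat₂; fun_prop

theorem integrable_max_inner_sub_mul_vScat (hβ : 0 < β) (hg : Continuous g)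
    (hgb : ∀ v, |g v| ≤ C * Real.exp (-β * ‖v‖ ^ 2)) (v₁ : Vel d) :
    Integrable (fun p => max ⟪v₁ - p.1, (p.2 : Vel d)⟫ 0 *
      (g (vScat₁ v₁ p.1 p.2) * g (vScat₂ v₁ p.1 p.2))) (collMeasure d) := by
  refine integrable_max_inner_sub_mul (C := C ^ 2) v₁ hβ (by fun_prop) fun p => ?_
  calc _ ≤ C ^ 2 * Real.exp (-β * (‖vScat₁ v₁ p.1 p.2‖ ^ 2 + ‖vScat₂ v₁ p.1 p.2‖ ^ 2)) :=
        abs_mul_le_of_abs_le_exp hgb _ _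
    _ = C ^ 2 * Real.exp (-β * (‖v₁‖ ^ 2 + ‖p.1‖ ^ 2)) := by
        rw [norm_vScat₁_sq_add_norm_vScat₂_sq v₁ p.1 p.2 (norm_eq_of_mem_sphere p.2)]
    _ ≤ C ^ 2 * Real.exp (-β * ‖p.1‖ ^ 2) := by
        gcongr C ^ 2 * Real.exp ?_
        nlinarith [sq_nonneg ‖v₁‖]

theorem integrable_max_inner_sub_mul_comp_fst (hβ : 0 < β) (hg : Continuous g)
    (hgb : ∀ v, |g v| ≤ C * Real.exp (-β * ‖v‖ ^ 2)) (v₁ : Vel d) :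
    Integrable (fun p => max ⟪v₁ - p.1, (p.2 : Vel d)⟫ 0 * g p.1) (collMeasure d) :=
  integrable_max_inner_sub_mul v₁ hβ (by fun_prop) fun p => hgb p.1

end Slice

section Collision

variable {d : ℕ}

noncomputable def lStarColl (g φ : Vel d → Vel d → ℝ) (x v₁ : Vel d) : ℝ :=
  ∫ p, max ⟪v₁ - p.1, (p.2 : Vel d)⟫ 0 * g x p.1 *
    deltaFn φ x v₁ p.1 (p.2 : Vel d) ∂(collMeasure d)

noncomputable def lColl (g h : Vel d → Vel d → ℝ) (x v₁ : Vel d) : ℝ :=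
  ∫ p, max ⟪v₁ - p.1, (p.2 : Vel d)⟫ 0 *
    (g x (vScat₂ v₁ p.1 (p.2 : Vel d)) * h x (vScat₁ v₁ p.1 (p.2 : Vel d)) +
      g x (vScat₁ v₁ p.1 (p.2 : Vel d)) * h x (vScat₂ v₁ p.1 (p.2 : Vel d)) -
      g x v₁ * h x p.1 - g x p.1 * h x v₁) ∂(collMeasure d)

theorem lStarOp_eq_fderiv_add_lStarColl (g φ : Vel d → Vel d → ℝ) (x v₁ : Vel d) :
    lStarOp g φ x v₁ = fderiv ℝ (fun y => φ y v₁) x v₁ + lStarColl g φ x v₁ := rfl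

theorem lOp_eq_neg_fderiv_add_lColl (g h : Vel d → Vel d → ℝ) (x v₁ : Vel d) :
    lOp g h x v₁ = -fderiv ℝ (fun y => h y v₁) x v₁ + lColl g h x v₁ := rfl

theorem sigmaOp_eq_collision_terms {g φ : Vel d → Vel d → ℝ} {x : Vel d} {β C M : ℝ} (hβ : 0 < β)
    (hg : Continuous (g x)) (hgb : ∀ v, |g x v| ≤ C * Real.exp (-β * ‖v‖ ^ 2))
    (hφ : Continuous (φ x)) (hφb : ∀ v, |φ x v| ≤ M) (v₁ : Vel d) :
    sigmaOp g φ x v₁ =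
      boltzColl g x v₁ * φ x v₁ - g x v₁ * lStarColl g φ x v₁ -
        lColl g (fun y v => g y v * φ y v) x v₁ + recollTerm g φ x v₁ := by
  have hgain := integrable_max_inner_sub_mul_vScat hβ hg hgb v₁
  have hloss := integrable_max_inner_sub_mul_comp_fst hβ hg hgb v₁
  have mul_φ : ∀ {I : Vel d × sphere (0 : Vel d) 1 → ℝ}, Integrable I (collMeasure d) →
      ∀ {u : Vel d × sphere (0 : Vel d) 1 → Vel d}, Continuous u →
        Integrable (fun p => I p * φ x (u p)) (collMeasure d) := fun hI _ hu =>
    hI.mul_bdd (hφ.comp hu).aestronglyMeasurable (ae_of_all _ fun p => hφb _)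
  have hs₁ : Continuous fun p : Vel d × sphere (0 : Vel d) 1 => vScat₁ v₁ p.1 p.2 := by fun_prop
  have hs₂ : Continuous fun p : Vel d × sphere (0 : Vel d) 1 => vScat₂ v₁ p.1 p.2 := by fun_prop
  have hQ : Integrable (fun p => max ⟪v₁ - p.1, (p.2 : Vel d)⟫ 0 *
      (g x (vScat₁ v₁ p.1 p.2) * g x (vScat₂ v₁ p.1 p.2) - g x v₁ * g x p.1))
      (collMeasure d) :=
    (hgain.sub (hloss.const_mul (g x v₁))).congr
      (ae_of_all _ fun p => by simp only [Pi.sub_apply]; ring)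
  have hL : Integrable (fun p => max ⟪v₁ - p.1, (p.2 : Vel d)⟫ 0 * g x p.1 *
      deltaFn φ x v₁ p.1 p.2) (collMeasure d) :=
    ((((mul_φ hloss hs₁).add (mul_φ hloss hs₂)).sub (hloss.mul_const (φ x v₁))).sub
      (mul_φ hloss continuous_fst)).congr
      (ae_of_all _ fun p => by simp only [Pi.add_apply, Pi.sub_apply, deltaFn]; ring)
  have hG : Integrable (fun p => max ⟪v₁ - p.1, (p.2 : Vel d)⟫ 0 *
      (g x (vScat₂ v₁ p.1 p.2) * (g x (vScat₁ v₁ p.1 p.2) * φ x (vScat₁ v₁ p.1 p.2)) +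
        g x (vScat₁ v₁ p.1 p.2) * (g x (vScat₂ v₁ p.1 p.2) * φ x (vScat₂ v₁ p.1 p.2)) -
        g x v₁ * (g x p.1 * φ x p.1) - g x p.1 * (g x v₁ * φ x v₁))) (collMeasure d) :=
    ((((mul_φ hgain hs₁).add (mul_φ hgain hs₂)).sub
      ((mul_φ hloss continuous_fst).const_mul (g x v₁))).sub
      (hloss.const_mul (g x v₁ * φ x v₁))).congr
      (ae_of_all _ fun p => by simp only [Pi.add_apply, Pi.sub_apply]; ring)
  have hR := mul_φ hQ continuous_fst
  simp only [sigmaOp, boltzColl, lStarColl, lColl, recollTerm]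
  rw [← integral_mul_const, ← integral_const_mul, ← integral_sub' (hQ.mul_const _)
    (hL.const_mul _), ← integral_sub' ((hQ.mul_const _).sub (hL.const_mul _)) hG,
    ← integral_add' (((hQ.mul_const _).sub (hL.const_mul _)).sub hG) hR, ← integral_neg]
  refine integral_congr_ae (ae_of_all _ fun p => ?_)
  simp only [Pi.add_apply, Pi.sub_apply, deltaFn]
  ring

end Collision

theorem covariance_operator_identity_general (d : ℕ) (C₀ β₀ : ℝ)
    (hβ₀ : 0 < β₀) (f : ℝ → Vel d → Vel d → ℝ)
    (hfC1 : ContDiff ℝ 1 (fun q : ℝ × Vel d × Vel d => f q.1 q.2.1 q.2.2))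
    (hfbd : ∀ (t : ℝ) (x v : Vel d), |f t x v| ≤ C₀ * Real.exp (-(β₀ / 2) * ‖v‖ ^ 2))
    (hBoltz : ∀ (t : ℝ) (x v₁ : Vel d),
      deriv (fun τ => f τ x v₁) t + fderiv ℝ (fun y => f t y v₁) x v₁ =
        boltzColl (f t) x v₁)
    (φ : Vel d → Vel d → ℝ)
    (hφC1 : ContDiff ℝ 1 (fun q : Vel d × Vel d => φ q.1 q.2))
    (hφbd : ∃ M : ℝ, ∀ x v : Vel d,
      |φ x v| ≤ M ∧ ‖fderiv ℝ (fun q : Vel d × Vel d => φ q.1 q.2) (x, v)‖ ≤ M) :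
    ∀ (t : ℝ) (x v₁ : Vel d),
      sigmaOp (f t) φ x v₁ =
        -(f t x v₁ * lStarOp (f t) φ x v₁) -
          lOp (f t) (fun y v => f t y v * φ y v) x v₁ +
          deriv (fun τ => f τ x v₁) t * φ x v₁ +
          recollTerm (f t) φ x v₁ := by
  obtain ⟨M, hM⟩ := hφbd
  intro t x v₁
  have hf_diff := hfC1.differentiable one_ne_zero
  have hφ_diff := hφC1.differentiable one_ne_zero
  have hcoll := sigmaOp_eq_collision_terms (half_pos hβ₀) (by fun_prop) (hfbd t x) (by fun_prop)
    (fun v => (hM x v).1) v₁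
  have hprod : fderiv ℝ (fun y => f t y v₁ * φ y v₁) x =
      f t x v₁ • fderiv ℝ (fun y => φ y v₁) x + φ x v₁ • fderiv ℝ (fun y => f t y v₁) x :=
    fderiv_mul (by fun_prop) (by fun_prop)
  rw [lStarOp_eq_fderiv_add_lStarColl, lOp_eq_neg_fderiv_add_lColl, hcoll, hprod]
  simp only [add_apply, smul_apply, smul_eq_mul]
  linear_combination -φ x v₁ * hBoltz t x v₁

theorem covariance_operator_identity (d : ℕ) (hd : 2 ≤ d) (C₀ β₀ : ℝ)
    (hC₀ : 0 < C₀) (hβ₀ : 0 < β₀) (f : ℝ → Vel d → Vel d → ℝ)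
    (hfper : ∀ t : ℝ, IsZdPeriodic (f t))
    (hfC1 : ContDiff ℝ 1 (fun q : ℝ × Vel d × Vel d => f q.1 q.2.1 q.2.2))
    (hfbd : ∀ (t : ℝ) (x v : Vel d), |f t x v| ≤ C₀ * Real.exp (-(β₀ / 2) * ‖v‖ ^ 2))
    (hftbd : ∀ (t : ℝ) (x v : Vel d),
      |deriv (fun τ => f τ x v) t| ≤ C₀ * Real.exp (-(β₀ / 2) * ‖v‖ ^ 2))
    (hfxbd : ∀ (t : ℝ) (x v : Vel d),
      ‖fderiv ℝ (fun y => f t y v) x‖ ≤ C₀ * Real.exp (-(β₀ / 2) * ‖v‖ ^ 2))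
    (hBoltz : ∀ (t : ℝ) (x v₁ : Vel d),
      deriv (fun τ => f τ x v₁) t + fderiv ℝ (fun y => f t y v₁) x v₁ =
        boltzColl (f t) x v₁)
    (φ : Vel d → Vel d → ℝ) (hφper : IsZdPeriodic φ)
    (hφC1 : ContDiff ℝ 1 (fun q : Vel d × Vel d => φ q.1 q.2))
    (hφbd : ∃ M : ℝ, ∀ x v : Vel d,
      |φ x v| ≤ M ∧ ‖fderiv ℝ (fun q : Vel d × Vel d => φ q.1 q.2) (x, v)‖ ≤ M) :
    ∀ (t : ℝ) (x v₁ : Vel d),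
      sigmaOp (f t) φ x v₁ =
        -(f t x v₁ * lStarOp (f t) φ x v₁) -
          lOp (f t) (fun y v => f t y v * φ y v) x v₁ +
          deriv (fun τ => f τ x v₁) t * φ x v₁ +
          recollTerm (f t) φ x v₁ :=
  covariance_operator_identity_general d C₀ β₀ hβ₀ f hfC1 hfbd hBoltz φ hφC1 hφbd
end
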